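/- arXiv:2108.10794 — 3 statements merged into one kernel-verified Lean document; each statement's English description precedes it below -/
import Mathlib

section
/- Fix an interval Λ = [a,b] with |Λ| ≥ 4. A configuration μ ∈ ℕ₀^Λ lies in the range of σ_Λ (i.e., is the configuration of some BVMD tiling of Λ) if and only if the following three conditions hold, each read as vacuously true for sites outside Λ: (1) μ_x ≥ 3 implies x ∈ {a,b}; (2) μ_x ≥ 1 implies μ_{x±1} = 0; (3) μ_x ≥ 2 implies μ_{x±2} = 0 and μ_{x±3} ≤ 1. Moreover, the BVMD tiling T with μ = σ_Λ(T) is unique; that is, σ_Λ : 𝒯_Λ → ℕ₀^Λ is injective. -/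
open scoped ENNReal NNReal Classical

namespace Bose

/-- Particle configurations on the one-dimensional lattice `ℤ`. -/
abbrev Config := ℤ → ℕ

/-- A configuration is supported on the interval `[a,b]`. -/
def SupportedOn (a b : ℤ) (μ : Config) : Prop := ∀ x : ℤ, x < a ∨ b < x → μ x = 0

/-- Add `n` particles at site `x`. -/
def addAt (x : ℤ) (n : ℕ) (μ : Config) : Config := fun y => if y = x then μ y + n else μ y

/-- Remove `n` particles at site `x` (truncated subtraction). -/
def subAt (x : ℤ) (n : ℕ) (μ : Config) : Config := fun y => if y = x then μ y - n else μ y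

/-- The configuration basis vector `|μ⟩` of the bosonic Fock space. -/
noncomputable def ket (μ : Config) : Config → ℂ := fun ν => if ν = μ then 1 else 0

/-- The ℓ²-inner product `⟨φ|ψ⟩` (junk value when not summable). -/
noncomputable def inner' (φ ψ : Config → ℂ) : ℂ :=
  ∑' μ : Config, (starRingEnd ℂ) (φ μ) * ψ μ

/-- `‖z‖²` as an extended nonnegative real. -/
noncomputable def en2 (z : ℂ) : ℝ≥0∞ := (‖z‖₊ : ℝ≥0∞) ^ 2

/-- Squared ℓ²-norm, valued in `ℝ≥0∞`. -/
noncomputable def normSq (ψ : Config → ℂ) : ℝ≥0∞ := ∑' μ : Config, en2 (ψ μ)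

noncomputable def sqrt2C : ℂ := (Real.sqrt 2 : ℂ)

/-- The hopping operator `q_x` (open boundary conditions / infinite lattice). -/
noncomputable def qOp (lam : ℂ) (x : ℤ) (ψ : Config → ℂ) (ν : Config) : ℂ :=
  (Real.sqrt (((ν x + 1) * (ν x + 2) : ℕ) : ℝ) : ℂ) * ψ (addAt x 2 ν)
    - lam * (Real.sqrt (((ν (x - 1) + 1) * (ν (x + 1) + 1) : ℕ) : ℝ) : ℂ) *
        ψ (addAt (x - 1) 1 (addAt (x + 1) 1 ν))

/-- The adjoint `q_x^*`. -/
noncomputable def qStar (lam : ℂ) (x : ℤ) (φ : Config → ℂ) (μ : Config) : ℂ :=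
  (Real.sqrt ((μ x * (μ x - 1) : ℕ) : ℝ) : ℂ) * φ (subAt x 2 μ)
    - (starRingEnd ℂ) lam * (Real.sqrt ((μ (x - 1) * μ (x + 1) : ℕ) : ℝ) : ℂ) *
        φ (subAt (x - 1) 1 (subAt (x + 1) 1 μ))

/-- Electrostatic energy `e_Λ^obc(μ)`. -/
noncomputable def eObc (a b : ℤ) (μ : Config) : ℕ := ∑ x ∈ Finset.Icc a (b - 1), μ x * μ (x + 1)

/-- The open boundary energy form `⟨ψ|H_Λ ψ⟩`, valued in `ℝ≥0∞`. -/
noncomputable def energyObc (a b : ℤ) (κ : ℝ) (lam : ℂ) (ψ : Config → ℂ) : ℝ≥0∞ :=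
  (∑' μ : Config, (eObc a b μ : ℝ≥0∞) * en2 (ψ μ))
    + ENNReal.ofReal κ * ∑ x ∈ Finset.Icc (a + 1) (b - 1), ∑' ν : Config, en2 (qOp lam x ψ ν)

/-- Membership in the bosonic Fock space `ℋ_Λ` for `Λ = [a,b]`. -/
def MemH (a b : ℤ) (ψ : Config → ℂ) : Prop :=
  normSq ψ ≠ ∞ ∧ ∀ μ : Config, ¬ SupportedOn a b μ → ψ μ = 0

/-- Ground states of `H_Λ` (frustration-free: zero energy). -/
def IsGroundObc (a b : ℤ) (κ : ℝ) (lam : ℂ) (ψ : Config → ℂ) : Prop :=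
  MemH a b ψ ∧ energyObc a b κ lam ψ = 0

/-- Orthogonality to the ground state space `𝒢_Λ`. -/
def OrthoG (a b : ℤ) (κ : ℝ) (lam : ℂ) (ψ : Config → ℂ) : Prop :=
  ∀ φ, IsGroundObc a b κ lam φ → inner' φ ψ = 0

/-- The spectral gap `E₁^obc(ℋ_Λ)` above the ground-state space. -/
noncomputable def E1obc (a b : ℤ) (κ : ℝ) (lam : ℂ) : ℝ≥0∞ :=
  ⨅ ψ : {ψ : Config → ℂ // MemH a b ψ ∧ energyObc a b κ lam ψ ≠ ∞ ∧ normSq ψ ≠ 0 ∧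
      OrthoG a b κ lam ψ},
    energyObc a b κ lam ψ.1 / normSq ψ.1

/-- The Hamiltonian `H_Λ`, acting pointwise. -/
noncomputable def Hop (a b : ℤ) (κ : ℝ) (lam : ℂ) (ψ : Config → ℂ) : Config → ℂ :=
  fun μ => (eObc a b μ : ℂ) * ψ μ
    + (κ : ℂ) * ∑ x ∈ Finset.Icc (a + 1) (b - 1), qStar lam x (qOp lam x ψ) μ

/-! ### Periodic boundary conditions -/

/-- Position `x` wrapped into the ring `[a,b]`. -/
def wrap (a b x : ℤ) : ℤ := a + (x - a) % (b - a + 1)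

/-- The hopping operator `q_x` with periodic boundary conditions. -/
noncomputable def qPer (a b : ℤ) (lam : ℂ) (x : ℤ) (ψ : Config → ℂ) (ν : Config) : ℂ :=
  (Real.sqrt (((ν x + 1) * (ν x + 2) : ℕ) : ℝ) : ℂ) * ψ (addAt x 2 ν)
    - lam * (Real.sqrt (((ν (wrap a b (x - 1)) + 1) * (ν (wrap a b (x + 1)) + 1) : ℕ) : ℝ) : ℂ) *
        ψ (addAt (wrap a b (x - 1)) 1 (addAt (wrap a b (x + 1)) 1 ν))

/-- Electrostatic energy `e_Λ^per(μ)`. -/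
noncomputable def ePer (a b : ℤ) (μ : Config) : ℕ := ∑ x ∈ Finset.Icc a b, μ x * μ (wrap a b (x + 1))

/-- The periodic energy form `⟨ψ|H_Λ^per ψ⟩`. -/
noncomputable def energyPer (a b : ℤ) (κ : ℝ) (lam : ℂ) (ψ : Config → ℂ) : ℝ≥0∞ :=
  (∑' μ : Config, (ePer a b μ : ℝ≥0∞) * en2 (ψ μ))
    + ENNReal.ofReal κ * ∑ x ∈ Finset.Icc a b, ∑' ν : Config, en2 (qPer a b lam x ψ ν)

def IsGroundPer (a b : ℤ) (κ : ℝ) (lam : ℂ) (ψ : Config → ℂ) : Prop :=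
  MemH a b ψ ∧ energyPer a b κ lam ψ = 0

def OrthoGPer (a b : ℤ) (κ : ℝ) (lam : ℂ) (ψ : Config → ℂ) : Prop :=
  ∀ φ, IsGroundPer a b κ lam φ → inner' φ ψ = 0

/-- The spectral gap `E₁^per(ℋ_Λ)`. -/
noncomputable def E1per (a b : ℤ) (κ : ℝ) (lam : ℂ) : ℝ≥0∞ :=
  ⨅ ψ : {ψ : Config → ℂ // MemH a b ψ ∧ energyPer a b κ lam ψ ≠ ∞ ∧ normSq ψ ≠ 0 ∧
      OrthoGPer a b κ lam ψ},
    energyPer a b κ lam ψ.1 / normSq ψ.1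

/-! ### The constants `γ` and the function `f` -/

noncomputable def gammaPer (κ s : ℝ) : ℝ :=
  (1 / 4) * min 1 (min (2 * κ / (κ + 1)) (2 * κ / (1 + κ * s)))

noncomputable def gammaObc (κ s : ℝ) : ℝ :=
  (1 / 5) * min (4 * gammaPer κ s) (2 * κ * s / (κ + 1))

noncomputable def gammaKappa (κ s : ℝ) : ℝ :=
  (1 / 5) * min 1 (min (2 * κ / (1 + κ * s)) (min (2 * κ / (κ + 1)) (2 * κ * s / (κ + 1))))

noncomputable def seqA (r : ℝ) : ℕ → ℝ
  | 0 => 1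
  | 1 => 1
  | n + 2 => seqA r (n + 1) + r * seqA r n

noncomputable def betaSeq (r : ℝ) (n : ℕ) : ℝ := seqA r (n - 1) / seqA r n

noncomputable def fN (r : ℝ) (n : ℕ) : ℝ :=
  r * betaSeq r n * betaSeq r (n - 2) *
    ((1 - betaSeq r (n - 1) * (1 + r)) ^ 2 / (1 + 2 * r)
      + 2 * (1 - betaSeq r (n - 1)) ^ 2 / (1 + r))

/-- `f(r) = sup_{n ≥ 4} f_n(r)`. -/
noncomputable def fFun (r : ℝ) : ℝ := ⨆ n : {m : ℕ // 4 ≤ m}, fN r n.1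

/-! ### BVMD tilings (open boundary conditions) -/

def tileV : List ℕ := [0]
def tileM : List ℕ := [1, 0]
def tileD : List ℕ := [0, 2, 0, 0]
def tileM1 : List ℕ := [1]
def tileD1 : List ℕ := [0, 2, 0]
def tileBl (n : ℕ) : List ℕ := [n, 0, 0]
def tileBr (n : ℕ) : List ℕ := [0, n]

def IsBulkTile (t : List ℕ) : Prop := t = tileV ∨ t = tileM ∨ t = tileD

def IsLeftTile (t : List ℕ) : Prop := IsBulkTile t ∨ ∃ n, 2 ≤ n ∧ t = tileBl n

def IsRightTile (t : List ℕ) : Prop :=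
  IsBulkTile t ∨ t = tileM1 ∨ t = tileD1 ∨ ∃ n, 2 ≤ n ∧ t = tileBr n

/-- Only the first (resp. last) tile may be a left (resp. right) boundary tile. -/
def TilingShape (T : List (List ℕ)) : Prop :=
  T ≠ [] ∧ ∀ i : Fin T.length,
    IsBulkTile (T.get i) ∨ ((i : ℕ) = 0 ∧ IsLeftTile (T.get i)) ∨
      ((i : ℕ) = T.length - 1 ∧ IsRightTile (T.get i))

/-- A BVMD tiling of the interval `[a,b]`. -/
def IsBVMD (a b : ℤ) (T : List (List ℕ)) : Prop :=
  TilingShape T ∧ (T.flatten.length : ℤ) = b - a + 1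

/-- The configuration obtained by laying down the occupation string `l` starting at `p`. -/
def listConfig (p : ℤ) (l : List ℕ) : Config :=
  fun x => if p ≤ x then l.getD (x - p).toNat 0 else 0

/-- The configuration `σ_Λ(T)` of a tiling `T` of an interval starting at `a`. -/
def sigmaT (a : ℤ) (T : List (List ℕ)) : Config := listConfig a T.flatten

/-- Equivalence generated by a one-step relation. -/
def Conn {α : Type*} (r : α → α → Prop) : α → α → Prop :=
  Relation.ReflTransGen (fun x y => r x y ∨ r y x)

/-- The substitution rules `(10)(10) ↔ (0200)` and `(10)(1) ↔ (020)`. -/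
inductive TileStep : List (List ℕ) → List (List ℕ) → Prop
  | dimer (pre post : List (List ℕ)) :
      TileStep (pre ++ [tileM, tileM] ++ post) (pre ++ [tileD] ++ post)
  | dimer1 (pre post : List (List ℕ)) :
      TileStep (pre ++ [tileM, tileM1] ++ post) (pre ++ [tileD1] ++ post)

/-- Two tilings are connected iff related by finitely many substitutions. -/
def TConn : List (List ℕ) → List (List ℕ) → Prop := Conn TileStep

/-- A root tiling: a BVMD tiling containing no dimer `D` or `D^{(1)}`. -/
def IsRootT (a b : ℤ) (R : List (List ℕ)) : Prop :=
  IsBVMD a b R ∧ tileD ∉ R ∧ tileD1 ∉ R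

/-- `ℤ`-induced (bulk) root tilings `ℛ_Λ^∞`. -/
def IsRootInf (a b : ℤ) (R : List (List ℕ)) : Prop :=
  IsRootT a b R ∧
    (R.head? = some tileV ∨ R.head? = some tileM ∨ R.head? = some (tileBl 2)) ∧
    (R.getLast? = some tileV ∨ R.getLast? = some tileM ∨ R.getLast? = some tileM1 ∨
      R.getLast? = some (tileBr 2))

/-- The number `d(T)` of dimers in a tiling. -/
def dimCount (T : List (List ℕ)) : ℕ := T.countP (fun t => t == tileD || t == tileD1)

/-- The BVMD state `ψ_Λ(R)` of a root tiling `R`. -/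
noncomputable def bvmdState (a : ℤ) (lam : ℂ) (R : List (List ℕ)) : Config → ℂ :=
  ∑ᶠ T ∈ {T : List (List ℕ) | TConn T R}, (lam / sqrt2C) ^ dimCount T • ket (sigmaT a T)

/-- The tiling space `𝒞_Λ(R)`. -/
noncomputable def Cspan (a : ℤ) (R : List (List ℕ)) : Submodule ℂ (Config → ℂ) :=
  Submodule.span ℂ {ψ | ∃ T, TConn T R ∧ ψ = ket (sigmaT a T)}

/-- Membership in the closed span `𝒞_Λ` of all BVMD tiling states. -/
def memC (a b : ℤ) (ψ : Config → ℂ) : Prop :=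
  normSq ψ ≠ ∞ ∧ ∀ μ : Config, (∀ T, IsBVMD a b T → sigmaT a T ≠ μ) → ψ μ = 0

/-- The bulk tiling space `𝒞_Λ^∞`. -/
noncomputable def CinfSub (a b : ℤ) : Submodule ℂ (Config → ℂ) :=
  Submodule.span ℂ {ψ | ∃ R T, IsRootInf a b R ∧ TConn T R ∧ ψ = ket (sigmaT a T)}

/-- The spectral gap `E₁(𝒞_Λ)` of `H_Λ` restricted to `𝒞_Λ`. -/
noncomputable def E1C (a b : ℤ) (κ : ℝ) (lam : ℂ) : ℝ≥0∞ :=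
  ⨅ ψ : {ψ : Config → ℂ // memC a b ψ ∧ normSq ψ ≠ 0 ∧ OrthoG a b κ lam ψ},
    energyObc a b κ lam ψ.1 / normSq ψ.1

/-- The spectral gap `E₁(𝒞_Λ^∞)` of `H_Λ` restricted to `𝒞_Λ^∞`. -/
noncomputable def E1CInf (a b : ℤ) (κ : ℝ) (lam : ℂ) : ℝ≥0∞ :=
  ⨅ ψ : {ψ : Config → ℂ // ψ ∈ CinfSub a b ∧ normSq ψ ≠ 0 ∧ OrthoG a b κ lam ψ},
    energyObc a b κ lam ψ.1 / normSq ψ.1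

/-- The configurations of `ℬ_Λ^∞`: tiling configurations with at most two particles per site. -/
def bulkB (a b : ℤ) (μ : Config) : Prop :=
  (∃ T, IsBVMD a b T ∧ sigmaT a T = μ) ∧ ∀ x, μ x ≤ 2

/-- Membership in the orthogonal complement `𝒞_Λ^⊥`. -/
def InCPerpObc (a b : ℤ) (ψ : Config → ℂ) : Prop :=
  ∀ T, IsBVMD a b T → ψ (sigmaT a T) = 0

/-- The ground state energy `E₀(𝒞_Λ^⊥)`. -/
noncomputable def E0perpObc (a b : ℤ) (κ : ℝ) (lam : ℂ) : ℝ≥0∞ :=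
  ⨅ ψ : {ψ : Config → ℂ // MemH a b ψ ∧ energyObc a b κ lam ψ ≠ ∞ ∧ InCPerpObc a b ψ ∧
      normSq ψ ≠ 0},
    energyObc a b κ lam ψ.1 / normSq ψ.1

/-! ### Periodic VMD tilings -/

/-- A periodic VMD tiling of the ring `[a,b]`: an exact cover of the ring by
the bulk tiles `V`, `M`, `D`, recorded by the partial function assigning to each
site the tile starting there. -/
structure PerTiling (a b : ℤ) where
  placed : ℤ → Option (List ℕ)
  supp : ∀ x : ℤ, x < a ∨ b < x → placed x = none
  bulk : ∀ x t, placed x = some t → IsBulkTile t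
  cover : ∀ y : ℤ, a ≤ y → y ≤ b →
    ∃! q : ℤ × ℕ, ∃ t, placed q.1 = some t ∧ q.2 < t.length ∧ wrap a b (q.1 + q.2) = y

/-- The configuration `σ_Λ(T)` of a periodic VMD tiling. -/
noncomputable def sigmaPer (a b : ℤ) (T : PerTiling a b) : Config := fun y =>
  if h : a ≤ y ∧ y ≤ b then
    (T.cover y h.1 h.2).choose_spec.1.choose.getD (T.cover y h.1 h.2).choose.2 0
  else 0

/-- The cyclic replacement rule `(10)(10) → (0200)`. -/
def PerStep (a b : ℤ) (T T' : PerTiling a b) : Prop :=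
  ∃ x : ℤ, T.placed x = some tileM ∧ T.placed (wrap a b (x + 2)) = some tileM ∧
    T'.placed x = some tileD ∧ T'.placed (wrap a b (x + 2)) = none ∧
    ∀ y : ℤ, y ≠ x → y ≠ wrap a b (x + 2) → T'.placed y = T.placed y

def PerConn (a b : ℤ) : PerTiling a b → PerTiling a b → Prop := Conn (PerStep a b)

/-- Periodic root tilings: only voids and monomers. -/
def IsPerRoot (a b : ℤ) (T : PerTiling a b) : Prop := ∀ x, T.placed x ≠ some tileD

/-- The number of dimers in a periodic tiling. -/
noncomputable def dimCountP (a b : ℤ) (T : PerTiling a b) : ℕ :=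
  ((Finset.Icc a b).filter fun x => T.placed x = some tileD).card

/-- The periodic VMD state `ψ_Λ^per(R)`. -/
noncomputable def perState (a b : ℤ) (lam : ℂ) (R : PerTiling a b) : Config → ℂ :=
  ∑ᶠ T ∈ {T : PerTiling a b | PerConn a b T R},
    (lam / sqrt2C) ^ dimCountP a b T • ket (sigmaPer a b T)

/-- Membership in the periodic tiling space `𝒞_Λ^per`. -/
def memCPer (a b : ℤ) (ψ : Config → ℂ) : Prop :=
  normSq ψ ≠ ∞ ∧ ∀ μ : Config, (∀ T : PerTiling a b, sigmaPer a b T ≠ μ) → ψ μ = 0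

/-- Membership in the orthogonal complement `(𝒞_Λ^per)^⊥`. -/
def InCPerpPer (a b : ℤ) (ψ : Config → ℂ) : Prop :=
  ∀ T : PerTiling a b, ψ (sigmaPer a b T) = 0

/-- The spectral gap `E₁^per(𝒞_Λ^per)`. -/
noncomputable def E1perC (a b : ℤ) (κ : ℝ) (lam : ℂ) : ℝ≥0∞ :=
  ⨅ ψ : {ψ : Config → ℂ // memCPer a b ψ ∧ normSq ψ ≠ 0 ∧ OrthoGPer a b κ lam ψ},
    energyPer a b κ lam ψ.1 / normSq ψ.1

/-- The ground state energy `E₀^per((𝒞_Λ^per)^⊥)`. -/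
noncomputable def E0perpPer (a b : ℤ) (κ : ℝ) (lam : ℂ) : ℝ≥0∞ :=
  ⨅ ψ : {ψ : Config → ℂ // MemH a b ψ ∧ energyPer a b κ lam ψ ≠ ∞ ∧ InCPerpPer a b ψ ∧
      normSq ψ ≠ 0},
    energyPer a b κ lam ψ.1 / normSq ψ.1

/-- The ground state energy of `H_Λ^per` in the `N`-particle sector. -/
noncomputable def E0sector (a b : ℤ) (κ : ℝ) (lam : ℂ) (N : ℕ) : ℝ≥0∞ :=
  ⨅ ψ : {ψ : Config → ℂ // MemH a b ψ ∧ energyPer a b κ lam ψ ≠ ∞ ∧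
      (∀ μ : Config, (∑ x ∈ Finset.Icc a b, μ x) ≠ N → ψ μ = 0) ∧ normSq ψ ≠ 0},
    energyPer a b κ lam ψ.1 / normSq ψ.1

/-- The number operator `N_Λ`. -/
noncomputable def numOp (a b : ℤ) (ψ : Config → ℂ) : Config → ℂ :=
  fun μ => ((∑ x ∈ Finset.Icc a b, μ x : ℕ) : ℂ) * ψ μ

/-- The number of particles `N_Λ(R)` in a periodic tiling. -/
noncomputable def particleNum (a b : ℤ) (T : PerTiling a b) : ℕ :=
  ∑ x ∈ Finset.Icc a b, sigmaPer a b T x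

/-! ### Tensor product machinery -/

def restrictC (a' b' : ℤ) (ν : Config) : Config := fun x => if a' ≤ x ∧ x ≤ b' then ν x else 0

def combine (a' b' : ℤ) (ν ρ : Config) : Config := fun x => if a' ≤ x ∧ x ≤ b' then ρ x else ν x

/-- Tensor product of states supported to the left/right of the cut after site `c`. -/
noncomputable def tens (c : ℤ) (ψ φ : Config → ℂ) : Config → ℂ :=
  fun ν => ψ (fun x => if x ≤ c then ν x else 0) * φ (fun x => if c < x then ν x else 0)

/-- Translation of a state by `s`. -/
noncomputable def shiftC (s : ℤ) (ψ : Config → ℂ) : Config → ℂ := fun ν => ψ (fun x => ν (x + s))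

/-- The embedding `φ ↦ |μ^l⟩ ⊗ φ ⊗ |μ^r⟩` of `ℋ_{Λ'}` into `ℋ_Λ`, with exterior
configuration given by the template `tmpl`. -/
noncomputable def embedL (a' b' : ℤ) (tmpl : Config) : (Config → ℂ) →ₗ[ℂ] (Config → ℂ) where
  toFun φ := fun ν =>
    if ∀ x : ℤ, x < a' ∨ b' < x → ν x = tmpl x then φ (restrictC a' b' ν) else 0
  map_add' φ χ := by
    funext ν
    by_cases h : ∀ x : ℤ, x < a' ∨ b' < x → ν x = tmpl x
    · simp only [Pi.add_apply, if_pos h]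
    · simp only [Pi.add_apply, if_neg h, add_zero]
  map_smul' c φ := by
    funext ν
    by_cases h : ∀ x : ℤ, x < a' ∨ b' < x → ν x = tmpl x
    · simp only [Pi.smul_apply, if_pos h, RingHom.id_apply]
    · simp only [Pi.smul_apply, if_neg h, smul_zero, RingHom.id_apply]

/-- The extension `A ⊗ 1_{Λ∖Λ'}` of an operator supported on `Λ' = [a',b']`. -/
noncomputable def extendOp (a' b' : ℤ) (A : (Config → ℂ) →ₗ[ℂ] (Config → ℂ)) :
    (Config → ℂ) →ₗ[ℂ] (Config → ℂ) where
  toFun ψ := fun ν => A (fun ρ => ψ (combine a' b' ν ρ)) (restrictC a' b' ν)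
  map_add' ψ φ := by
    funext ν
    have h : (fun ρ => (ψ + φ) (combine a' b' ν ρ))
        = (fun ρ => ψ (combine a' b' ν ρ)) + fun ρ => φ (combine a' b' ν ρ) := rfl
    show A (fun ρ => (ψ + φ) (combine a' b' ν ρ)) (restrictC a' b' ν) = _
    rw [h, map_add]; rfl
  map_smul' c ψ := by
    funext ν
    have h : (fun ρ => (c • ψ) (combine a' b' ν ρ))
        = c • fun ρ => ψ (combine a' b' ν ρ) := rfl
    show A (fun ρ => (c • ψ) (combine a' b' ν ρ)) (restrictC a' b' ν) = _
    rw [h, map_smul]; rfl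

/-- The square of the operator norm of `A` restricted to the subspace `S`. -/
noncomputable def opNormSqOn (S : Submodule ℂ (Config → ℂ))
    (A : (Config → ℂ) →ₗ[ℂ] (Config → ℂ)) : ℝ≥0∞ :=
  ⨆ ψ : {ψ : Config → ℂ // ψ ∈ S ∧ normSq ψ ≠ 0}, normSq (A ψ.1) / normSq ψ.1

/-- The left slice of `ψ` at fixed configuration `t` on the sites `> c`. -/
noncomputable def sliceL (c : ℤ) (t : Config) (ψ : Config → ℂ) : Config → ℂ :=
  fun ρ => if ∀ x : ℤ, c < x → ρ x = 0 then ψ (fun x => if x ≤ c then ρ x else t x) else 0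

/-- The right slice of `ψ` at fixed configuration `t` on the sites `< c`. -/
noncomputable def sliceR (c : ℤ) (t : Config) (ψ : Config → ℂ) : Config → ℂ :=
  fun ρ => if ∀ x : ℤ, x < c → ρ x = 0 then ψ (fun x => if c ≤ x then ρ x else t x) else 0

/-- `P` is the orthogonal projection onto the closed subspace (given by the set) `S`. -/
def IsProjOnto (P : (Config → ℂ) →ₗ[ℂ] (Config → ℂ)) (S : Set (Config → ℂ)) : Prop :=
  (∀ ψ, normSq ψ ≠ ∞ → P ψ ∈ S) ∧ (∀ ψ ∈ S, normSq ψ ≠ ∞ → P ψ = ψ) ∧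
    ∀ φ ψ, normSq φ ≠ ∞ → normSq ψ ≠ ∞ → inner' (P φ) ψ = inner' φ (P ψ)

/-! ### Squeezed Tao–Thouless states and the excited states `η`, `ξ` -/

/-- The root tiling `M_n^{(i)}` by `n` monomers, the last of length `i`. -/
def rootMon (n i : ℕ) : List (List ℕ) :=
  List.replicate (n - 1) tileM ++ [if i = 1 then tileM1 else tileM]

/-- The squeezed Tao–Thouless state `φ_n` on `[1,2n]` (`φ_0 = 1`). -/
noncomputable def phiTT (lam : ℂ) (n : ℕ) : Config → ℂ :=
  if n = 0 then ket (fun _ => 0) else bvmdState 1 lam (rootMon n 2)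

/-- The squeezed Tao–Thouless state `φ_n^{(i)}` on `[1,2(n-1)+i]`. -/
noncomputable def phiTTi (lam : ℂ) (n i : ℕ) : Config → ℂ :=
  if n = 0 then ket (fun _ => 0) else bvmdState 1 lam (rootMon n i)

/-- The norm ratio `β_n = ‖φ_{n-1}‖²/‖φ_n‖²`. -/
noncomputable def betaN (lam : ℂ) (n : ℕ) : ℝ :=
  (normSq (phiTT lam (n - 1))).toReal / (normSq (phiTT lam n)).toReal

def sigd (i : ℕ) : List ℕ := if i = 1 then [0, 2, 0] else [0, 2, 0, 0]

/-- The excited state `η_n^{(i)}`, supported on `[1, 2(n-1)+i]`. -/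
noncomputable def etaState (lam : ℂ) (n i : ℕ) : Config → ℂ :=
  (-(((starRingEnd ℂ) lam) / sqrt2C) * ((betaN lam (n - 1) : ℝ) : ℂ)) •
      tens ((2 * (n - 1) : ℕ) : ℤ) (phiTT lam (n - 1))
        (shiftC ((2 * (n - 1) : ℕ) : ℤ) (phiTTi lam 1 i))
    + tens ((2 * (n - 2) : ℕ) : ℤ) (phiTT lam (n - 2))
        (shiftC ((2 * (n - 2) : ℕ) : ℤ) (ket (listConfig 1 (sigd i))))

/-- Number of trailing monomer tiles of a root tiling. -/
def monCount (R : List (List ℕ)) : ℕ :=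
  (R.reverse.takeWhile fun t => t == tileM || t == tileM1).length

/-- Length parameter of the last monomer: `1` if it is `M^{(1)}`, else `2`. -/
def lastIdx (R : List (List ℕ)) : ℕ := if R.getLast? = some tileM1 then 1 else 2

/-- The part `R̃` of `R` before its trailing monomers. -/
def trunk (R : List (List ℕ)) : List (List ℕ) := R.take (R.length - monCount R)

/-- `ℛ_Λ^MM`: root tilings ending in two or more monomers. -/
def IsMM (R : List (List ℕ)) : Prop := 2 ≤ monCount R

/-- `R_D`: replace the two last monomers of `R` by a dimer. -/
def rootD (R : List (List ℕ)) : List (List ℕ) :=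
  R.take (R.length - 2) ++ [if R.getLast? = some tileM1 then tileD1 else tileD]

/-- The excited state `ξ_Λ(R) = ψ_{Λ(n,i)}(R̃) ⊗ η_n^{(i)}`. -/
noncomputable def xiState (a : ℤ) (lam : ℂ) (R : List (List ℕ)) : Config → ℂ :=
  tens (a + ((trunk R).flatten.length : ℤ) - 1) (bvmdState a lam (trunk R))
    (shiftC (a + ((trunk R).flatten.length : ℤ) - 1) (etaState lam (monCount R) (lastIdx R)))

/-- The subspace `𝒞_Λ^∞ ∩ (𝒢_{[a,b-2]} ⊗ ℋ_{[b-1,b]})`. -/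
def GtensorSet (a b : ℤ) (κ : ℝ) (lam : ℂ) : Set (Config → ℂ) :=
  {ψ | ψ ∈ CinfSub a b ∧ ∀ t : Config, IsGroundObc a (b - 2) κ lam (sliceL (b - 2) t ψ)}

/-! ### Invariant subspaces for excited states -/

/-- Replacement rules for the subspaces `𝒟_{l,r}^{(m)}`. -/
inductive XStep : List (List ℕ) → List (List ℕ) → Prop
  | mm (pre post : List (List ℕ)) :
      XStep (pre ++ [tileM, tileM] ++ post) (pre ++ [tileD] ++ post)
  | mm1 (pre post : List (List ℕ)) :
      XStep (pre ++ [tileM, tileM1] ++ post) (pre ++ [tileD1] ++ post)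
  | r3 (pre post : List (List ℕ)) :
      XStep (pre ++ [tileM1, tileD] ++ post) (pre ++ [[0, 2, 1, 0, 0]] ++ post)
  | r4 (pre post : List (List ℕ)) :
      XStep (pre ++ [tileD1, tileM] ++ post) (pre ++ [[0, 1, 2, 0, 0]] ++ post)

def XConn : List (List ℕ) → List (List ℕ) → Prop := Conn XStep

/-- The root tiling `R_{l,r}^{(m)} = (10)_l (01)_m (10)_r`. -/
def rootLRM (l m r : ℕ) : List (List ℕ) :=
  List.replicate l tileM ++ List.replicate m [0, 1] ++ List.replicate r tileM

/-- The invariant subspace `𝒟_{l,r}^{(m)}` on `Λ = [-2l, 2(r+m)-1]`. -/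
noncomputable def Dspace (l m r : ℕ) : Submodule ℂ (Config → ℂ) :=
  Submodule.span ℂ {ψ | ∃ T, XConn T (rootLRM l m r) ∧ ψ = ket (sigmaT (-(2 * l : ℤ)) T)}

/-- The ground state energy `E₀(𝒟_{l,r}^{(m)})`. -/
noncomputable def E0D (κ : ℝ) (lam : ℂ) (l r m : ℕ) : ℝ≥0∞ :=
  ⨅ ψ : {ψ : Config → ℂ // ψ ∈ Dspace l m r ∧ normSq ψ ≠ 0},
    energyObc (-(2 * l : ℤ)) (2 * ((r : ℤ) + m) - 1) κ lam ψ.1 / normSq ψ.1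

/-- The excited state `η_r`, supported on `[1,2r]`. -/
noncomputable def etaR (lam : ℂ) (r : ℕ) : Config → ℂ :=
  (-(((starRingEnd ℂ) lam) / sqrt2C) * ((betaN lam (r - 1) : ℝ) : ℂ)) •
      tens 2 (ket (listConfig 1 [1, 0])) (shiftC 2 (phiTT lam (r - 1)))
    + tens 4 (ket (listConfig 1 [0, 2, 0, 0])) (shiftC 4 (phiTT lam (r - 2)))

/-- The part `ψ` of the variational state, supported on `[1, 2r+3]`. -/
noncomputable def varPsiR (κ : ℝ) (lam : ℂ) (r : ℕ) : Config → ℂ :=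
  tens 3 (ket (listConfig 1 [1, 0, 1])
        + (-(sqrt2C * (κ : ℂ) * lam / ((2 * κ - 1 : ℝ) : ℂ))) • ket (listConfig 1 [0, 2, 0]))
      (shiftC 3 (phiTT lam r))
    + (-(sqrt2C * lam / ((2 * κ - 1 : ℝ) : ℂ))) •
        tens 3 (ket (listConfig 1 [1, 0, 1])) (shiftC 3 (etaR lam r))

/-- The variational state `φ_l ⊗ |0⟩ ⊗ ψ ∈ 𝒟_{l,r}^{(2)}`. -/
noncomputable def varPsi (κ : ℝ) (lam : ℂ) (l r : ℕ) : Config → ℂ :=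
  tens (-1) (shiftC (-(2 * (l : ℤ) + 1)) (phiTT lam l))
    (tens 0 (ket (fun _ => 0)) (varPsiR κ lam r))

/-! ### Auxiliary list-level development -/

/-- Local conditions for a suffix string (条件 (1) only allows large values at the end). -/
def CondR (s : List ℕ) : Prop :=
  (∀ i, 3 ≤ s.getD i 0 → i + 1 = s.length) ∧
  (∀ i, 1 ≤ s.getD i 0 → s.getD (i+1) 0 = 0) ∧
  (∀ i, 1 ≤ s.getD (i+1) 0 → s.getD i 0 = 0) ∧
  (∀ i, 2 ≤ s.getD i 0 → s.getD (i+2) 0 = 0) ∧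
  (∀ i, 2 ≤ s.getD i 0 → s.getD (i+3) 0 ≤ 1) ∧
  (∀ i, 2 ≤ s.getD (i+2) 0 → s.getD i 0 = 0) ∧
  (∀ i, 2 ≤ s.getD (i+3) 0 → s.getD i 0 ≤ 1)

/-- Full local conditions (large values allowed at either end). -/
def CondL (s : List ℕ) : Prop :=
  (∀ i, 3 ≤ s.getD i 0 → i = 0 ∨ i + 1 = s.length) ∧
  (∀ i, 1 ≤ s.getD i 0 → s.getD (i+1) 0 = 0) ∧
  (∀ i, 1 ≤ s.getD (i+1) 0 → s.getD i 0 = 0) ∧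
  (∀ i, 2 ≤ s.getD i 0 → s.getD (i+2) 0 = 0) ∧
  (∀ i, 2 ≤ s.getD i 0 → s.getD (i+3) 0 ≤ 1) ∧
  (∀ i, 2 ≤ s.getD (i+2) 0 → s.getD i 0 = 0) ∧
  (∀ i, 2 ≤ s.getD (i+3) 0 → s.getD i 0 ≤ 1)

/-- Valid tile sequences: bulk tiles, the last may be a right boundary tile. -/
inductive PR : List (List ℕ) → Prop
  | nil : PR []
  | m1 : PR [tileM1]
  | d1 : PR [tileD1]
  | br (n : ℕ) (h : 2 ≤ n) : PR [tileBr n]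
  | v (T) : PR T → PR (tileV :: T)
  | m (T) : PR T → PR (tileM :: T)
  | d (T) : PR T → PR (tileD :: T)

lemma condR_nil : CondR [] := by
  refine ⟨?_,?_,?_,?_,?_,?_,?_⟩ <;> intro i <;> simp [List.getD]

lemma condR_cons {s : List ℕ} {x : ℕ} (h : CondR s)
    (h0 : 3 ≤ x → s = [])
    (h1 : 1 ≤ x → s.getD 0 0 = 0)
    (h2 : 1 ≤ s.getD 0 0 → x = 0)
    (h3 : 2 ≤ x → s.getD 1 0 = 0)
    (h4 : 2 ≤ x → s.getD 2 0 ≤ 1)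
    (h5 : 2 ≤ s.getD 1 0 → x = 0)
    (h6 : 2 ≤ s.getD 2 0 → x ≤ 1) : CondR (x :: s) := by
  obtain ⟨c1,c2,c3,c4,c5,c6,c7⟩ := h
  refine ⟨?_,?_,?_,?_,?_,?_,?_⟩ <;> rintro (_|i) hi <;>
    simp only [List.getD_cons_zero, List.getD_cons_succ, List.length_cons] at *
  · have := h0 hi; simp [this]
  · have := c1 i hi; omega
  · exact h1 hi
  · exact c2 i hi
  · exact h2 hi
  · exact c3 i hi
  · exact h3 hi
  · exact c4 i hi
  · exact h4 hi
  · exact c5 i hi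
  · exact h5 hi
  · exact c6 i hi
  · exact h6 hi
  · exact c7 i hi

lemma condR_cons0 {s : List ℕ} (h : CondR s) : CondR (0 :: s) :=
  condR_cons h (by omega) (by omega) (fun _ => rfl) (by omega) (by omega)
    (fun _ => rfl) (fun _ => by omega)

lemma condR_tail {x : ℕ} {s : List ℕ} (h : CondR (x :: s)) : CondR s := by
  obtain ⟨c1,c2,c3,c4,c5,c6,c7⟩ := h
  refine ⟨?_,?_,?_,?_,?_,?_,?_⟩ <;> intro i hi
  · have := c1 (i+1) (by simpa using hi)
    simp at this; omega
  · exact c2 (i+1) (by simpa using hi)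
  · exact c3 (i+1) (by simpa using hi)
  · exact c4 (i+1) (by simpa using hi)
  · exact c5 (i+1) (by simpa using hi)
  · exact c6 (i+1) (by simpa using hi)
  · exact c7 (i+1) (by simpa using hi)

lemma condL_tail {x : ℕ} {s : List ℕ} (h : CondL (x :: s)) : CondR s := by
  obtain ⟨c1,c2,c3,c4,c5,c6,c7⟩ := h
  refine ⟨?_,?_,?_,?_,?_,?_,?_⟩ <;> intro i hi
  · have := c1 (i+1) (by simpa using hi)
    simp at this; omega
  · exact c2 (i+1) (by simpa using hi)
  · exact c3 (i+1) (by simpa using hi)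
  · exact c4 (i+1) (by simpa using hi)
  · exact c5 (i+1) (by simpa using hi)
  · exact c6 (i+1) (by simpa using hi)
  · exact c7 (i+1) (by simpa using hi)

lemma condR_condL {s : List ℕ} (h : CondR s) : CondL s :=
  ⟨fun i hi => Or.inr (h.1 i hi), h.2.1, h.2.2.1, h.2.2.2.1, h.2.2.2.2.1,
    h.2.2.2.2.2.1, h.2.2.2.2.2.2⟩

/-- Prepending a left-boundary-type head. -/
lemma condL_of_condR_cons {s : List ℕ} {x : ℕ} (h : CondR s)
    (h1 : 1 ≤ x → s.getD 0 0 = 0)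
    (h2 : 1 ≤ s.getD 0 0 → x = 0)
    (h3 : 2 ≤ x → s.getD 1 0 = 0)
    (h4 : 2 ≤ x → s.getD 2 0 ≤ 1)
    (h5 : 2 ≤ s.getD 1 0 → x = 0)
    (h6 : 2 ≤ s.getD 2 0 → x ≤ 1) : CondL (x :: s) := by
  obtain ⟨c1,c2,c3,c4,c5,c6,c7⟩ := h
  refine ⟨?_,?_,?_,?_,?_,?_,?_⟩ <;> rintro (_|i) hi <;>
    simp only [List.getD_cons_zero, List.getD_cons_succ, List.length_cons] at *
  · exact Or.inl trivial
  · have := c1 i hi; omega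
  · exact h1 hi
  · exact c2 i hi
  · exact h2 hi
  · exact c3 i hi
  · exact h3 hi
  · exact c4 i hi
  · exact h4 hi
  · exact c5 i hi
  · exact h5 hi
  · exact c6 i hi
  · exact h6 hi
  · exact c7 i hi


lemma flatten_v (T : List (List ℕ)) : (tileV :: T).flatten = 0 :: T.flatten := by
  simp [tileV]
lemma flatten_m (T : List (List ℕ)) : (tileM :: T).flatten = 1 :: 0 :: T.flatten := by
  simp [tileM]
lemma flatten_d (T : List (List ℕ)) :
    (tileD :: T).flatten = 0 :: 2 :: 0 :: 0 :: T.flatten := by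
  simp [tileD]

/-- Forward direction: valid tile sequences satisfy the local conditions. -/
lemma pr_cond {T : List (List ℕ)} (h : PR T) :
    CondR T.flatten ∧ T.flatten.getD 0 0 ≤ 1 := by
  induction h with
  | nil => exact ⟨condR_nil, by simp⟩
  | m1 =>
      refine ⟨?_, by simp [tileM1]⟩
      have : ([tileM1] : List (List ℕ)).flatten = [1] := by simp [tileM1]
      rw [this]
      exact condR_cons condR_nil (by omega) (by simp) (by simp) (by omega) (by simp)
        (by simp) (by simp)
  | d1 =>
      refine ⟨?_, by simp [tileD1]⟩
      have : ([tileD1] : List (List ℕ)).flatten = [0, 2, 0] := by simp [tileD1]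
      rw [this]
      have hc : CondR [2, 0] := condR_cons (condR_cons0 condR_nil)
        (by omega) (by simp) (by simp) (by simp) (by simp) (by simp) (by simp)
      exact condR_cons0 hc
  | br n hn =>
      refine ⟨?_, by simp [tileBr]⟩
      have : ([tileBr n] : List (List ℕ)).flatten = [0, n] := by simp [tileBr]
      rw [this]
      have hc : CondR [n] := condR_cons condR_nil (fun _ => rfl) (by simp) (by simp)
        (by simp) (by simp) (by simp) (by simp)
      exact condR_cons0 hc
  | v T hT ih =>
      rw [flatten_v]
      exact ⟨condR_cons0 ih.1, by simp⟩
  | m T hT ih =>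
      rw [flatten_m]
      refine ⟨?_, by simp⟩
      have hf := ih.2
      refine condR_cons (condR_cons0 ih.1) (by omega) (by simp) (by simp) (by omega)
        (by omega) ?_ ?_
      · simp only [List.getD_cons_succ]; omega
      · intro _; omega
  | d T hT ih =>
      rw [flatten_d]
      refine ⟨?_, by simp⟩
      have hf := ih.2
      have h1 : CondR (2 :: 0 :: 0 :: T.flatten) := by
        refine condR_cons (condR_cons0 (condR_cons0 ih.1)) (by omega) (by simp) (by simp)
          (by simp) ?_ (by simp) ?_
        · simp only [List.getD_cons_succ]; intro _; omega
        · simp only [List.getD_cons_succ]; intro _; omega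
      exact condR_cons0 h1

/-- Existence: the local conditions imply parseability. -/
lemma cond_exists : ∀ (N : ℕ) (s : List ℕ), s.length ≤ N → CondR s → s.getD 0 0 ≤ 1 →
    ∃ T, PR T ∧ T.flatten = s := by
  intro N
  induction N with
  | zero =>
      intro s hs _ _
      have : s = [] := List.length_eq_zero_iff.mp (by omega)
      exact ⟨[], PR.nil, by simp [this]⟩
  | succ N ih =>
      intro s hs hc hhead
      obtain ⟨c1,c2,c3,c4,c5,c6,c7⟩ := hc
      match s, hs, hhead with
      | [], _, _ => exact ⟨[], PR.nil, by simp⟩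
      | 1 :: t, hs, hhead =>
          have ht0 : t.getD 0 0 = 0 := by
            have := c2 0 (by simp); simpa using this
          match t, ht0 with
          | [], _ => exact ⟨[tileM1], PR.m1, by simp [tileM1]⟩
          | 0 :: u, _ =>
              have hu0 : u.getD 0 0 ≤ 1 := by
                by_contra hcon
                have := c6 0 (by simpa using (by omega : 2 ≤ u.getD 0 0))
                simp at this
              have hcu : CondR u := condR_tail (condR_tail ⟨c1,c2,c3,c4,c5,c6,c7⟩)
              obtain ⟨T, hT, hfT⟩ := ih u (by simp at hs ⊢; omega) hcu hu0
              exact ⟨tileM :: T, PR.m T hT, by rw [flatten_m, hfT]⟩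
      | 0 :: t, hs, hhead =>
          match t with
          | [] => exact ⟨[tileV], PR.v [] PR.nil, by simp [tileV]⟩
          | 0 :: u =>
              obtain ⟨T, hT, hfT⟩ := ih (0 :: u) (by simp at hs ⊢; omega)
                (condR_tail ⟨c1,c2,c3,c4,c5,c6,c7⟩) (by simp)
              exact ⟨tileV :: T, PR.v T hT, by rw [flatten_v, hfT]⟩
          | 1 :: u =>
              obtain ⟨T, hT, hfT⟩ := ih (1 :: u) (by simp at hs ⊢; omega)
                (condR_tail ⟨c1,c2,c3,c4,c5,c6,c7⟩) (by simp)
              exact ⟨tileV :: T, PR.v T hT, by rw [flatten_v, hfT]⟩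
          | 2 :: u =>
              have hu0 : u.getD 0 0 = 0 := by
                have := c2 1 (by simp); simpa using this
              match u, hu0 with
              | [], _ => exact ⟨[tileBr 2], PR.br 2 le_rfl, by simp [tileBr]⟩
              | 0 :: w, _ =>
                  have hw0 : w.getD 0 0 = 0 := by
                    have := c4 1 (by simp); simpa using this
                  match w, hw0 with
                  | [], _ => exact ⟨[tileD1], PR.d1, by simp [tileD1]⟩
                  | 0 :: v, _ =>
                      have hv0 : v.getD 0 0 ≤ 1 := by
                        have := c5 1 (by simp); simpa using this
                      have hcv : CondR v := condR_tail (condR_tail (condR_tail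
                        (condR_tail ⟨c1,c2,c3,c4,c5,c6,c7⟩)))
                      obtain ⟨T, hT, hfT⟩ := ih v (by simp at hs ⊢; omega) hcv hv0
                      exact ⟨tileD :: T, PR.d T hT, by rw [flatten_d, hfT]⟩
          | (k+3) :: u =>
              have hlen : 1 + 1 = (0 :: (k+3) :: u).length := c1 1 (by simp)
              have hu : u = [] := by
                simpa using hlen
              subst hu
              exact ⟨[tileBr (k+3)], PR.br (k+3) (by omega), by simp [tileBr]⟩


lemma pr_head {T : List (List ℕ)} (h : PR T) : T.flatten.getD 0 0 ≤ 1 := (pr_cond h).2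

lemma pr_unique {T : List (List ℕ)} (h : PR T) :
    ∀ {T' : List (List ℕ)}, PR T' → T.flatten = T'.flatten → T = T' := by
  induction h with
  | nil => intro T' h' he; cases h' <;>
      simp_all [tileM1, tileD1, tileBr, tileV, tileM, tileD, flatten_v, flatten_m, flatten_d]
  | m1 => intro T' h' he; cases h' <;>
      simp_all [tileM1, tileD1, tileBr, tileV, tileM, tileD, flatten_v, flatten_m, flatten_d]
  | d1 =>
      intro T' h' he
      cases h' with
      | v T' hT' =>
          exfalso
          rw [flatten_v] at he
          simp [tileD1] at he
          have h2 := pr_head hT'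
          rw [← he] at h2
          simp at h2
      | _ => simp_all [tileM1, tileD1, tileBr, tileV, tileM, tileD, flatten_v, flatten_m, flatten_d]
  | br n hn =>
      intro T' h' he
      cases h' with
      | v T' hT' =>
          exfalso
          rw [flatten_v] at he
          simp [tileBr] at he
          have h2 := pr_head hT'
          rw [← he] at h2
          simp at h2
          omega
      | _ => simp_all [tileM1, tileD1, tileBr, tileV, tileM, tileD, flatten_v, flatten_m, flatten_d]
  | v T hT ih =>
      intro T' h' he
      cases h' with
      | v T' hT' =>
          rw [flatten_v, flatten_v] at he
          simp only [List.cons.injEq, true_and] at he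
          rw [ih hT' he]
      | d T' hT' =>
          exfalso
          rw [flatten_v, flatten_d] at he
          simp only [List.cons.injEq, true_and] at he
          have h2 := pr_head hT
          rw [he] at h2
          simp at h2
      | d1 =>
          exfalso
          rw [flatten_v] at he
          simp [tileD1] at he
          have h2 := pr_head hT
          rw [he] at h2
          simp at h2
      | br n hn =>
          exfalso
          rw [flatten_v] at he
          simp [tileBr] at he
          have h2 := pr_head hT
          rw [he] at h2
          simp at h2
          omega
      | _ => simp_all [tileM1, tileD1, tileBr, tileV, tileM, tileD, flatten_v, flatten_m, flatten_d]
  | m T hT ih =>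
      intro T' h' he
      cases h' with
      | m T' hT' =>
          rw [flatten_m, flatten_m] at he
          simp only [List.cons.injEq, true_and] at he
          rw [ih hT' he]
      | _ => simp_all [tileM1, tileD1, tileBr, tileV, tileM, tileD, flatten_v, flatten_m, flatten_d]
  | d T hT ih =>
      intro T' h' he
      cases h' with
      | d T' hT' =>
          rw [flatten_d, flatten_d] at he
          simp only [List.cons.injEq, true_and] at he
          rw [ih hT' he]
      | v T' hT' =>
          exfalso
          rw [flatten_d, flatten_v] at he
          simp only [List.cons.injEq, true_and] at he
          have h2 := pr_head hT'
          rw [← he] at h2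
          simp at h2
      | _ => simp_all [tileM1, tileD1, tileBr, tileV, tileM, tileD, flatten_v, flatten_m, flatten_d]


def ShapeR (T : List (List ℕ)) : Prop :=
  ∀ i : Fin T.length, IsBulkTile (T.get i) ∨ ((i : ℕ) + 1 = T.length ∧ IsRightTile (T.get i))

lemma shapeR_tail {t : List ℕ} {T : List (List ℕ)} (h : ShapeR (t :: T)) : ShapeR T := by
  intro i
  have := h ⟨(i : ℕ) + 1, by simp⟩
  rcases this with hb | ⟨h1, h2⟩
  · exact Or.inl hb
  · refine Or.inr ⟨by simp at h1; omega, h2⟩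

lemma shapeR_cons_bulk {t : List ℕ} {T : List (List ℕ)} (hb : IsBulkTile t)
    (h : ShapeR T) : ShapeR (t :: T) := by
  rintro ⟨_ | i, hi⟩
  · exact Or.inl hb
  · rcases h ⟨i, by simpa using hi⟩ with h1 | ⟨h1, h2⟩
    · exact Or.inl h1
    · exact Or.inr ⟨by simpa using h1, h2⟩

lemma shapeR_single {t : List ℕ} (hr : IsRightTile t) : ShapeR [t] := by
  rintro ⟨_ | i, hi⟩
  · exact Or.inr ⟨rfl, hr⟩
  · simp at hi

lemma shapeR_pr : ∀ T, ShapeR T → PR T := by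
  intro T
  induction T with
  | nil => exact fun _ => PR.nil
  | cons t T ih =>
      intro h
      rcases h ⟨0, by simp⟩ with hb | ⟨hlen, hr⟩
      · have hT := ih (shapeR_tail h)
        have hb' : IsBulkTile t := hb
        rcases hb' with h1 | h1 | h1 <;> rw [h1]
        · exact PR.v T hT
        · exact PR.m T hT
        · exact PR.d T hT
      · have hlen' : (0 : ℕ) + 1 = (t :: T).length := hlen
        have hT0 : T = [] := List.length_eq_zero_iff.mp (by simp only [List.length_cons] at hlen'; omega)
        subst hT0
        have hr' : IsRightTile t := hr
        rcases hr' with (h1 | h1 | h1) | h1 | h1 | ⟨n, hn, h1⟩ <;> rw [h1]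
        · exact PR.v [] PR.nil
        · exact PR.m [] PR.nil
        · exact PR.d [] PR.nil
        · exact PR.m1
        · exact PR.d1
        · exact PR.br n hn

lemma pr_shapeR {T : List (List ℕ)} (h : PR T) : ShapeR T := by
  induction h with
  | nil => rintro ⟨i, hi⟩; simp at hi
  | m1 => exact shapeR_single (Or.inr (Or.inl rfl))
  | d1 => exact shapeR_single (Or.inr (Or.inr (Or.inl rfl)))
  | br n hn => exact shapeR_single (Or.inr (Or.inr (Or.inr ⟨n, hn, rfl⟩)))
  | v T hT ih => exact shapeR_cons_bulk (Or.inl rfl) ih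
  | m T hT ih => exact shapeR_cons_bulk (Or.inr (Or.inl rfl)) ih
  | d T hT ih => exact shapeR_cons_bulk (Or.inr (Or.inr rfl)) ih

lemma shapeR_shape {T : List (List ℕ)} (hne : T ≠ []) (h : ShapeR T) : TilingShape T := by
  refine ⟨hne, fun i => ?_⟩
  rcases h i with h1 | ⟨h1, h2⟩
  · exact Or.inl h1
  · have := i.isLt
    exact Or.inr (Or.inr ⟨by omega, h2⟩)

lemma shape_bl {n : ℕ} {T₁ : List (List ℕ)} (hn : 2 ≤ n) (h : PR T₁) :
    TilingShape (tileBl n :: T₁) := by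
  refine ⟨by simp, ?_⟩
  rintro ⟨_ | i, hi⟩
  · exact Or.inr (Or.inl ⟨rfl, Or.inr ⟨n, hn, rfl⟩⟩)
  · have hi' : i < T₁.length := by simpa using hi
    rcases pr_shapeR h ⟨i, hi'⟩ with h1 | ⟨h1, h2⟩
    · exact Or.inl h1
    · have h1' : i + 1 = T₁.length := h1
      refine Or.inr (Or.inr ⟨?_, h2⟩)
      show i + 1 = (tileBl n :: T₁).length - 1
      simp only [List.length_cons]
      omega

lemma tileBl_not_bulk {n : ℕ} (hn : 2 ≤ n) : ¬ IsBulkTile (tileBl n) := by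
  rintro (h | h | h) <;> simp [tileBl, tileV, tileM, tileD] at h

lemma tileBl_not_right {n : ℕ} (hn : 2 ≤ n) : ¬ IsRightTile (tileBl n) := by
  rintro (h | h | h | ⟨m, hm, h⟩) <;>
    first
      | exact tileBl_not_bulk hn h
      | simp [tileBl, tileM1, tileD1, tileBr] at h

lemma shape_cases {T : List (List ℕ)} (h : TilingShape T) :
    PR T ∨ ∃ n, 2 ≤ n ∧ ∃ T₁, T = tileBl n :: T₁ ∧ PR T₁ := by
  obtain ⟨hne, hsh⟩ := h
  rcases T with _ | ⟨t, T₁⟩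
  · exact absurd rfl hne
  have htail : ShapeR T₁ := by
    intro i
    have := hsh ⟨(i : ℕ) + 1, by simp⟩
    rcases this with hb | ⟨h1, _⟩ | ⟨h1, hr⟩
    · exact Or.inl hb
    · have h1' : (i : ℕ) + 1 = 0 := h1
      omega
    · have h1' : (i : ℕ) + 1 = (t :: T₁).length - 1 := h1
      simp only [List.length_cons] at h1'
      exact Or.inr ⟨by omega, hr⟩
  rcases hsh ⟨0, by simp⟩ with hb | ⟨_, hl⟩ | ⟨hlast, hr⟩
  · exact Or.inl (shapeR_pr _ (shapeR_cons_bulk hb htail))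
  · have hl' : IsLeftTile t := hl
    rcases hl' with hb | ⟨n, hn, hbl⟩
    · exact Or.inl (shapeR_pr _ (shapeR_cons_bulk hb htail))
    · exact Or.inr ⟨n, hn, T₁, by rw [show t = tileBl n from hbl], shapeR_pr _ htail⟩
  · have hlast' : (0 : ℕ) = (t :: T₁).length - 1 := hlast
    simp only [List.length_cons] at hlast'
    have hT1 : T₁ = [] := List.length_eq_zero_iff.mp (by omega)
    subst hT1
    have hr' : IsRightTile t := hr
    exact Or.inl (shapeR_pr _ (shapeR_single hr'))


lemma flatten_bl (n : ℕ) (T : List (List ℕ)) :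
    (tileBl n :: T).flatten = n :: 0 :: 0 :: T.flatten := by simp [tileBl]

lemma listConfig_getD (a : ℤ) (l : List ℕ) (i : ℕ) :
    listConfig a l (a + i) = l.getD i 0 := by
  unfold listConfig
  rw [if_pos (by omega : a ≤ a + (i : ℤ))]
  congr 1
  omega

lemma listConfig_neg (a : ℤ) (l : List ℕ) {x : ℤ} (hx : x < a) : listConfig a l x = 0 := by
  unfold listConfig
  rw [if_neg (by omega)]

lemma listConfig_inj {a : ℤ} {l l' : List ℕ} (hlen : l.length = l'.length)
    (h : listConfig a l = listConfig a l') : l = l' := by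
  apply List.ext_getElem hlen
  intro i h1 h2
  have e := (listConfig_getD a l i).symm.trans
    ((congrFun h (a + i)).trans (listConfig_getD a l' i))
  rwa [List.getD_eq_getElem l 0 h1, List.getD_eq_getElem l' 0 h2] at e

/-- **Lemma 2.1 (BVMD Tiling Configurations).** For an interval `Λ = [a,b]` with `|Λ| ≥ 4`,
a configuration `μ ∈ ℕ₀^Λ` is in the range of `σ_Λ` iff (1) `μ_x ≥ 3` implies `x ∈ {a,b}`;
(2) `μ_x ≥ 1` implies `μ_{x±1} = 0`; (3) `μ_x ≥ 2` implies `μ_{x±2} = 0` and `μ_{x±3} ≤ 1`.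
Moreover `σ_Λ` is injective on BVMD tilings. -/
theorem bvmd_tiling_configs (a b : ℤ) (hab : 4 ≤ b - a + 1) :
    (∀ μ : Config, SupportedOn a b μ →
      ((∃ T, IsBVMD a b T ∧ sigmaT a T = μ) ↔
        ((∀ x : ℤ, 3 ≤ μ x → x = a ∨ x = b) ∧
          (∀ x : ℤ, 1 ≤ μ x → μ (x + 1) = 0 ∧ μ (x - 1) = 0) ∧
          (∀ x : ℤ, 2 ≤ μ x →
            μ (x + 2) = 0 ∧ μ (x - 2) = 0 ∧ μ (x + 3) ≤ 1 ∧ μ (x - 3) ≤ 1)))) ∧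
    (∀ T T', IsBVMD a b T → IsBVMD a b T' → sigmaT a T = sigmaT a T' → T = T') := by
  have hnz : (((b - a + 1).toNat : ℤ)) = b - a + 1 := Int.toNat_of_nonneg (by omega)
  set n : ℕ := (b - a + 1).toNat with hn
  have hn4 : 4 ≤ n := by omega
  constructor
  · intro μ hsupp
    set s : List ℕ := (List.range n).map (fun i : ℕ => μ (a + (i : ℤ))) with hs
    have hslen : s.length = n := by simp [hs]
    have hgetD : ∀ i : ℕ, s.getD i 0 = μ (a + i) := by
      intro i
      by_cases hi : i < n
      · rw [List.getD_eq_getElem s 0 (by omega)]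
        simp [hs]
      · rw [List.getD_eq_default s 0 (by omega)]
        exact (hsupp (a + i) (by right; omega)).symm
    have hval : ∀ x : ℤ, a ≤ x → μ x = s.getD (x - a).toNat 0 := by
      intro x hx
      have h1 : a + (((x - a).toNat : ℕ) : ℤ) = x := by omega
      rw [hgetD, h1]
    clear_value s
    have hmusig : listConfig a s = μ := by
      funext x
      by_cases hx : a ≤ x
      · have h1 : a + (((x - a).toNat : ℕ) : ℤ) = x := by omega
        rw [← h1, listConfig_getD, hgetD]
      · rw [listConfig_neg a s (by omega), hsupp x (by left; omega)]
    constructor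
    · -- tiling → conditions
      rintro ⟨T, ⟨hshape, hlen⟩, hσ⟩
      have hflen : T.flatten.length = n := by omega
      have hfs : T.flatten = s := by
        apply listConfig_inj (a := a) (by rw [hflen, hslen])
        show listConfig a T.flatten = listConfig a s
        rw [hmusig]
        exact hσ
      have hcondL : CondL s := by
        rcases shape_cases hshape with hpr | ⟨n₀, hn₀, T₁, hTeq, hpr⟩
        · rw [← hfs]; exact condR_condL (pr_cond hpr).1
        · rw [← hfs, hTeq, flatten_bl]
          have hc1 := (pr_cond hpr).1
          have hh1 := pr_head hpr
          refine condL_of_condR_cons (condR_cons0 (condR_cons0 hc1)) (fun _ => rfl)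
            (by simp) (fun _ => rfl) (fun _ => by simpa using hh1) (by simp) ?_
          simp only [List.getD_cons_succ]
          omega
      obtain ⟨c1, c2, c3, c4, c5, c6, c7⟩ := hcondL
      refine ⟨?_, ?_, ?_⟩
      · intro x hx
        have hax : a ≤ x ∧ x ≤ b := by
          by_contra hcon
          rw [hsupp x (by omega)] at hx
          omega
        set i := (x - a).toNat with hi
        rw [hval x hax.1] at hx
        rcases c1 i hx with h0 | hlast
        · left; omega
        · right; omega
      · intro x hx
        have hax : a ≤ x ∧ x ≤ b := by
          by_contra hcon
          rw [hsupp x (by omega)] at hx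
          omega
        set i := (x - a).toNat with hi
        rw [hval x hax.1] at hx
        constructor
        · rw [hval (x + 1) (by omega), show (x + 1 - a).toNat = i + 1 by omega]
          exact c2 i hx
        · by_cases hxa : a ≤ x - 1
          · rw [hval (x - 1) hxa]
            have hii : i = (x - 1 - a).toNat + 1 := by omega
            exact c3 _ (by rwa [← hii])
          · exact hsupp (x - 1) (by left; omega)
      · intro x hx
        have hax : a ≤ x ∧ x ≤ b := by
          by_contra hcon
          rw [hsupp x (by omega)] at hx
          omega
        set i := (x - a).toNat with hi
        rw [hval x hax.1] at hx
        refine ⟨?_, ?_, ?_, ?_⟩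
        · rw [hval (x + 2) (by omega), show (x + 2 - a).toNat = i + 2 by omega]
          exact c4 i hx
        · by_cases hxa : a ≤ x - 2
          · rw [hval (x - 2) hxa]
            have hii : i = (x - 2 - a).toNat + 2 := by omega
            exact c6 _ (by rwa [← hii])
          · exact hsupp (x - 2) (by left; omega)
        · rw [hval (x + 3) (by omega), show (x + 3 - a).toNat = i + 3 by omega]
          exact c5 i hx
        · by_cases hxa : a ≤ x - 3
          · rw [hval (x - 3) hxa]
            have hii : i = (x - 3 - a).toNat + 3 := by omega
            exact c7 _ (by rwa [← hii])
          · rw [hsupp (x - 3) (by left; omega)]; omega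
    · -- conditions → tiling
      rintro ⟨m1, m2, m3⟩
      have c1 : ∀ i, 3 ≤ s.getD i 0 → i = 0 ∨ i + 1 = s.length := by
        intro i hi
        have hilt : i < s.length := by
          by_contra hcon
          rw [List.getD_eq_default s 0 (by omega)] at hi
          omega
        rw [hgetD i] at hi
        rcases m1 (a + i) hi with h0 | h0
        · left; omega
        · right; omega
      have c2 : ∀ i, 1 ≤ s.getD i 0 → s.getD (i+1) 0 = 0 := by
        intro i hi
        rw [hgetD] at hi ⊢
        rw [show a + ((i : ℕ) + 1 : ℕ) = (a + i) + 1 by push_cast; ring]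
        exact (m2 _ hi).1
      have c3 : ∀ i, 1 ≤ s.getD (i+1) 0 → s.getD i 0 = 0 := by
        intro i hi
        rw [hgetD] at hi ⊢
        have := (m2 _ hi).2
        rwa [show a + ((i : ℕ) + 1 : ℕ) - 1 = a + i by push_cast; ring] at this
      have c4 : ∀ i, 2 ≤ s.getD i 0 → s.getD (i+2) 0 = 0 := by
        intro i hi
        rw [hgetD] at hi ⊢
        rw [show a + ((i : ℕ) + 2 : ℕ) = (a + i) + 2 by push_cast; ring]
        exact (m3 _ hi).1
      have c5 : ∀ i, 2 ≤ s.getD i 0 → s.getD (i+3) 0 ≤ 1 := by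
        intro i hi
        rw [hgetD] at hi ⊢
        rw [show a + ((i : ℕ) + 3 : ℕ) = (a + i) + 3 by push_cast; ring]
        exact (m3 _ hi).2.2.1
      have c6 : ∀ i, 2 ≤ s.getD (i+2) 0 → s.getD i 0 = 0 := by
        intro i hi
        rw [hgetD] at hi ⊢
        have := (m3 _ hi).2.1
        rwa [show a + ((i : ℕ) + 2 : ℕ) - 2 = a + i by push_cast; ring] at this
      have c7 : ∀ i, 2 ≤ s.getD (i+3) 0 → s.getD i 0 ≤ 1 := by
        intro i hi
        rw [hgetD] at hi ⊢
        have := (m3 _ hi).2.2.2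
        rwa [show a + ((i : ℕ) + 3 : ℕ) - 3 = a + i by push_cast; ring] at this
      by_cases hhead : s.getD 0 0 ≤ 1
      · have hcond : CondR s := by
          refine ⟨?_, c2, c3, c4, c5, c6, c7⟩
          intro i hi
          rcases c1 i hi with h0 | h0
          · subst h0; omega
          · exact h0
        obtain ⟨T, hpr, hfl⟩ := cond_exists s.length s le_rfl hcond hhead
        have hne : T ≠ [] := by
          rintro rfl
          rw [← hfl] at hslen
          simp at hslen
          omega
        refine ⟨T, ⟨shapeR_shape hne (pr_shapeR hpr), by rw [hfl, hslen]; omega⟩, ?_⟩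
        show listConfig a T.flatten = μ
        rw [hfl, hmusig]
      · push_neg at hhead
        obtain ⟨x0, x1, x2, t, rfl⟩ : ∃ x0 x1 x2 t, s = x0 :: x1 :: x2 :: t := by
          match s, hslen with
          | [], h => simp at h; omega
          | [x], h => simp at h; omega
          | [x, y], h => simp at h; omega
          | x0 :: x1 :: x2 :: t, _ => exact ⟨x0, x1, x2, t, rfl⟩
        have hx0 : 2 ≤ x0 := by simp at hhead; omega
        have hx1 : x1 = 0 := by simpa using c2 0 (by simpa using (by omega : 1 ≤ x0))
        have hx2 : x2 = 0 := by simpa using c4 0 (by simpa using hx0)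
        subst hx1
        subst hx2
        have ht0 : t.getD 0 0 ≤ 1 := by simpa using c5 0 (by simpa using hx0)
        have hcondt : CondR t :=
          condR_tail (condR_tail (condL_tail ⟨c1, c2, c3, c4, c5, c6, c7⟩))
        obtain ⟨T₁, hpr, hfl⟩ := cond_exists t.length t le_rfl hcondt ht0
        refine ⟨tileBl x0 :: T₁, ⟨shape_bl hx0 hpr, ?_⟩, ?_⟩
        · rw [flatten_bl, hfl]
          show (((x0 :: 0 :: 0 :: t).length : ℕ) : ℤ) = b - a + 1
          rw [hslen]
          omega
        · show listConfig a (tileBl x0 :: T₁).flatten = μ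
          rw [flatten_bl, hfl]
          exact hmusig
  · -- injectivity
    intro T T' hT hT' heq
    obtain ⟨hsh, hlen⟩ := hT
    obtain ⟨hsh', hlen'⟩ := hT'
    have hfeq : T.flatten = T'.flatten :=
      listConfig_inj (a := a) (by omega) heq
    rcases shape_cases hsh with hpr | ⟨n₀, hn₀, T₁, hTeq, hpr⟩ <;>
      rcases shape_cases hsh' with hpr' | ⟨n₀', hn₀', T₁', hTeq', hpr'⟩
    · exact pr_unique hpr hpr' hfeq
    · exfalso
      have h1 := pr_head hpr
      rw [hfeq, hTeq', flatten_bl] at h1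
      simp at h1
      omega
    · exfalso
      have h1 := pr_head hpr'
      rw [← hfeq, hTeq, flatten_bl] at h1
      simp at h1
      omega
    · rw [hTeq, hTeq'] at hfeq ⊢
      rw [flatten_bl, flatten_bl] at hfeq
      injection hfeq with h1 h2
      injection h2 with _ h3
      injection h3 with _ h4
      rw [h1, pr_unique hpr hpr' h4]


end Bose
end

section
/- For any interval Λ = [a,b] with |Λ| ≥ 5, the ground-state space of H_Λ is supported on BVMD tilings: 𝒢_Λ = ker H_Λ ⊆ 𝒞_Λ. Equivalently, if ψ ∈ dom(H_Λ) satisfies ⟨ψ|H_Λψ⟩ = 0, then ψ(μ) = 0 for every configuration μ ∈ ℕ₀^Λ not of the form σ_Λ(T) for a BVMD tiling T. -/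
open scoped ENNReal NNReal Classical

namespace Bose

/-! ### Auxiliary lemmas for Lemma 2.3 -/

section SupportLemmas

lemma addAt_apply_self (x : ℤ) (n : ℕ) (μ : Config) : addAt x n μ x = μ x + n := if_pos rfl

lemma addAt_apply_ne {y x : ℤ} (n : ℕ) (μ : Config) (h : y ≠ x) : addAt x n μ y = μ y := if_neg h

lemma subAt_apply_self (x : ℤ) (n : ℕ) (μ : Config) : subAt x n μ x = μ x - n := if_pos rfl

lemma subAt_apply_ne {y x : ℤ} (n : ℕ) (μ : Config) (h : y ≠ x) : subAt x n μ y = μ y := if_neg h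

lemma eq_addAt2 {x : ℤ} {μ : Config} (h : 2 ≤ μ x) : addAt x 2 (subAt x 2 μ) = μ := by
  funext y
  by_cases hy : y = x
  · subst hy; rw [addAt_apply_self, subAt_apply_self]; omega
  · rw [addAt_apply_ne _ _ hy, subAt_apply_ne _ _ hy]

lemma eq_addAt11 {u w : ℤ} {μ : Config} (hu : 1 ≤ μ u) (hw : 1 ≤ μ w) (huw : u ≠ w) :
    addAt u 1 (addAt w 1 (subAt u 1 (subAt w 1 μ))) = μ := by
  funext y
  by_cases hyu : y = u
  · subst hyu
    rw [addAt_apply_self, addAt_apply_ne _ _ huw, subAt_apply_self, subAt_apply_ne _ _ huw]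
    omega
  · by_cases hyw : y = w
    · subst hyw
      rw [addAt_apply_ne _ _ hyu, addAt_apply_self, subAt_apply_ne _ _ hyu, subAt_apply_self]
      omega
    · rw [addAt_apply_ne _ _ hyu, addAt_apply_ne _ _ hyw, subAt_apply_ne _ _ hyu,
        subAt_apply_ne _ _ hyw]

lemma en2_eq_zero {z : ℂ} : en2 z = 0 ↔ z = 0 := by simp [en2]

/-- The basic transfer relation coming from `q_x ψ = 0`. -/
lemma transfer {lam : ℂ} {x : ℤ} {ψ : Config → ℂ} {ν : Config} (hlam : lam ≠ 0)
    (hq : qOp lam x ψ ν = 0) :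
    ψ (addAt x 2 ν) = 0 ↔ ψ (addAt (x - 1) 1 (addAt (x + 1) 1 ν)) = 0 := by
  unfold qOp at hq
  rw [sub_eq_zero] at hq
  have c1pos : (0 : ℝ) < Real.sqrt (((ν x + 1) * (ν x + 2) : ℕ) : ℝ) :=
    Real.sqrt_pos.mpr (by positivity)
  have c2pos : (0 : ℝ) < Real.sqrt (((ν (x - 1) + 1) * (ν (x + 1) + 1) : ℕ) : ℝ) :=
    Real.sqrt_pos.mpr (by positivity)
  have c1ne : ((Real.sqrt (((ν x + 1) * (ν x + 2) : ℕ) : ℝ) : ℝ) : ℂ) ≠ 0 :=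
    Complex.ofReal_ne_zero.mpr (ne_of_gt c1pos)
  have c2ne : ((Real.sqrt (((ν (x - 1) + 1) * (ν (x + 1) + 1) : ℕ) : ℝ) : ℝ) : ℂ) ≠ 0 :=
    Complex.ofReal_ne_zero.mpr (ne_of_gt c2pos)
  constructor
  · intro h
    rw [h, mul_zero] at hq
    rcases mul_eq_zero.mp hq.symm with h' | h'
    · rcases mul_eq_zero.mp h' with h'' | h''
      · exact absurd h'' hlam
      · exact absurd h'' c2ne
    · exact h'
  · intro h
    rw [h, mul_zero] at hq
    rcases mul_eq_zero.mp hq with h' | h'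
    · exact absurd h' c1ne
    · exact h'

section Kill

variable {a b : ℤ} {lam : ℂ} {ψ : Config → ℂ}
variable (hE : ∀ μ : Config, eObc a b μ ≠ 0 → ψ μ = 0)
variable (hq : ∀ x : ℤ, a + 1 ≤ x → x ≤ b - 1 → ∀ ν : Config, qOp lam x ψ ν = 0)
variable (hlam : lam ≠ 0)

include hE in
lemma kill_adj {y : ℤ} {μ : Config} (hy1 : a ≤ y) (hy2 : y ≤ b - 1)
    (h1 : 1 ≤ μ y) (h2 : 1 ≤ μ (y + 1)) : ψ μ = 0 := by
  apply hE
  intro h0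
  have := Finset.sum_eq_zero_iff.mp h0 y (Finset.mem_Icc.mpr ⟨hy1, hy2⟩)
  rcases Nat.mul_eq_zero.mp this with h | h <;> omega

include hE hq hlam in
lemma kill_big {x : ℤ} {μ : Config} (hx1 : a < x) (hx2 : x < b) (h3 : 3 ≤ μ x) : ψ μ = 0 := by
  have key := transfer hlam (hq x (by omega) (by omega) (subAt x 2 μ))
  rw [eq_addAt2 (by omega)] at key
  apply key.mpr
  apply kill_adj hE (y := x) (by omega) (by omega)
  · rw [addAt_apply_ne 1 _ (by omega), addAt_apply_ne 1 _ (by omega), subAt_apply_self]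
    omega
  · rw [addAt_apply_ne 1 _ (by omega), addAt_apply_self, subAt_apply_ne _ _ (by omega)]
    omega

include hE hq hlam in
lemma kill_C {x : ℤ} {μ : Config} (hx1 : a ≤ x) (hx2 : x + 2 ≤ b)
    (h1 : 1 ≤ μ x) (h2 : 1 ≤ μ (x + 2)) (hor : 2 ≤ μ x ∨ 2 ≤ μ (x + 2)) : ψ μ = 0 := by
  have key := transfer hlam (hq (x + 1) (by omega) (by omega) (subAt x 1 (subAt (x + 2) 1 μ)))
  have e1 : x + 1 - 1 = x := by ring
  have e2 : x + 1 + 1 = x + 2 := by ring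
  rw [e1, e2, eq_addAt11 h1 h2 (by omega)] at key
  apply key.mp
  rcases hor with h | h
  · apply kill_adj hE (y := x) (by omega) (by omega)
    · rw [addAt_apply_ne 2 _ (by omega), subAt_apply_self, subAt_apply_ne _ _ (by omega)]
      omega
    · rw [addAt_apply_self, subAt_apply_ne _ _ (by omega), subAt_apply_ne _ _ (by omega)]
      omega
  · apply kill_adj hE (y := x + 1) (by omega) (by omega)
    · rw [addAt_apply_self, subAt_apply_ne _ _ (by omega), subAt_apply_ne _ _ (by omega)]
      omega
    · have e3 : x + 1 + 1 = x + 2 := by ring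
      rw [e3, addAt_apply_ne 2 _ (by omega), subAt_apply_ne _ _ (by omega), subAt_apply_self]
      omega

include hE hq hlam in
lemma kill_D {x : ℤ} {μ : Config} (hab : a + 4 ≤ b) (hx1 : a ≤ x) (hx2 : x + 3 ≤ b)
    (h1 : 2 ≤ μ x) (h2 : 2 ≤ μ (x + 3)) : ψ μ = 0 := by
  by_cases hxa : a < x
  · have key := transfer hlam (hq x (by omega) (by omega) (subAt x 2 μ))
    rw [eq_addAt2 h1] at key
    apply key.mpr
    have e3 : x + 1 + 2 = x + 3 := by ring
    apply kill_C hE hq hlam (x := x + 1) (by omega) (by omega)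
    · rw [addAt_apply_ne 1 _ (by omega), addAt_apply_self, subAt_apply_ne _ _ (by omega)]
      omega
    · rw [e3, addAt_apply_ne 1 _ (by omega), addAt_apply_ne 1 _ (by omega),
        subAt_apply_ne _ _ (by omega)]
      omega
    · right
      rw [e3, addAt_apply_ne 1 _ (by omega), addAt_apply_ne 1 _ (by omega),
        subAt_apply_ne _ _ (by omega)]
      omega
  · have hxa' : x = a := by omega
    have key := transfer hlam (hq (x + 3) (by omega) (by omega) (subAt (x + 3) 2 μ))
    rw [eq_addAt2 h2] at key
    apply key.mpr
    have e1 : x + 3 - 1 = x + 2 := by ring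
    have e2 : x + 3 + 1 = x + 4 := by ring
    rw [e1, e2]
    apply kill_C hE hq hlam (x := x) (by omega) (by omega)
    · rw [addAt_apply_ne 1 _ (by omega), addAt_apply_ne 1 _ (by omega),
        subAt_apply_ne _ _ (by omega)]
      omega
    · rw [addAt_apply_self, addAt_apply_ne 1 _ (by omega), subAt_apply_ne _ _ (by omega)]
      omega
    · left
      rw [addAt_apply_ne 1 _ (by omega), addAt_apply_ne 1 _ (by omega),
        subAt_apply_ne _ _ (by omega)]
      omega

end Kill

/-! #### Combinatorics of tilings -/

/-- Good local conditions on an occupation list. -/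
def GoodList (l : List ℕ) : Prop :=
  (∀ i, 1 ≤ l.getD i 0 → l.getD (i + 1) 0 = 0) ∧
  (∀ i, 1 ≤ l.getD i 0 → l.getD (i + 2) 0 ≤ 1) ∧
  (∀ i, 2 ≤ l.getD i 0 → l.getD (i + 2) 0 = 0) ∧
  (∀ i, 2 ≤ l.getD i 0 → l.getD (i + 3) 0 ≤ 1)

lemma goodList_tail {c : ℕ} {l : List ℕ} (h : GoodList (c :: l)) : GoodList l := by
  obtain ⟨h1, h2, h3, h4⟩ := h
  refine ⟨fun i hi => ?_, fun i hi => ?_, fun i hi => ?_, fun i hi => ?_⟩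
  · have := h1 (i + 1) (by simpa using hi); simpa using this
  · have := h2 (i + 1) (by simpa using hi); simpa using this
  · have := h3 (i + 1) (by simpa using hi); simpa using this
  · have := h4 (i + 1) (by simpa using hi); simpa using this

lemma bnd_tail {c : ℕ} {l : List ℕ}
    (h : ∀ i, i + 1 < (c :: l).length → (c :: l).getD i 0 ≤ 2) :
    ∀ i, i + 1 < l.length → l.getD i 0 ≤ 2 := fun i hi => by
  have := h (i + 1) (by simp; omega); simpa using this

/-- Shape predicate for the tail of a tiling: all tiles bulk, except the last which may
be a right boundary tile. -/
def BulkShape (T : List (List ℕ)) : Prop :=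
  ∀ i : Fin T.length, IsBulkTile (T.get i) ∨ ((i : ℕ) = T.length - 1 ∧ IsRightTile (T.get i))

lemma bulkShape_nil : BulkShape [] := fun i => absurd i.2 (by simp)

lemma bulkShape_single {t : List ℕ} (h : IsRightTile t) : BulkShape [t] := by
  intro i
  have hi : (i : ℕ) < 1 := by simpa using i.2
  have h0 : (i : ℕ) = 0 := by omega
  have : i = ⟨0, by simp⟩ := Fin.ext h0
  subst this
  exact Or.inr ⟨by simp, h⟩

lemma bulkShape_cons {t : List ℕ} (ht : IsBulkTile t) {T : List (List ℕ)} (hT : BulkShape T) :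
    BulkShape (t :: T) := by
  intro i
  match i with
  | ⟨0, h⟩ => exact Or.inl ht
  | ⟨j + 1, h⟩ =>
    have h' : j < T.length := by simpa using h
    rcases hT ⟨j, h'⟩ with hb | ⟨he, hr⟩
    · exact Or.inl hb
    · refine Or.inr ⟨?_, hr⟩
      have he' : j = T.length - 1 := he
      show j + 1 = (t :: T).length - 1
      simp only [List.length_cons]
      omega

lemma isBulk_V : IsBulkTile tileV := Or.inl rfl
lemma isBulk_M : IsBulkTile tileM := Or.inr (Or.inl rfl)
lemma isBulk_D : IsBulkTile tileD := Or.inr (Or.inr rfl)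

/-- Greedy construction of the bulk part of a tiling. -/
lemma bulk_tiling : ∀ (n : ℕ) (l : List ℕ), l.length ≤ n → GoodList l →
    (∀ i, i + 1 < l.length → l.getD i 0 ≤ 2) → l.getD 0 0 ≤ 1 →
    ∃ T : List (List ℕ), T.flatten = l ∧ BulkShape T := by
  intro n
  induction n with
  | zero =>
    intro l hl _ _ _
    have : l = [] := List.length_eq_zero_iff.mp (by omega)
    exact ⟨[], by simp [this], bulkShape_nil⟩
  | succ n ih =>
    intro l hl hG hB h0
    rcases l with _ | ⟨c, rest⟩
    · exact ⟨[], by simp, bulkShape_nil⟩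
    rcases c with _ | m
    · -- head is 0
      by_cases hr : rest.getD 0 0 ≤ 1
      · obtain ⟨T, hT1, hT2⟩ := ih rest (by simp at hl; omega) (goodList_tail hG)
          (bnd_tail hB) hr
        exact ⟨tileV :: T, by simp [tileV, hT1], bulkShape_cons isBulk_V hT2⟩
      · push_neg at hr
        rcases rest with _ | ⟨m, rest2⟩
        · simp at hr
        have hm : 2 ≤ m := by simp at hr; omega
        rcases rest2 with _ | ⟨d, rest3⟩
        · -- l = [0, m]
          exact ⟨[tileBr m], by simp [tileBr],
            bulkShape_single (Or.inr (Or.inr (Or.inr ⟨m, hm, rfl⟩)))⟩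
        have hd : d = 0 := by
          have := hG.1 1 (by simp; omega); simpa using this
        rcases rest3 with _ | ⟨e, rest4⟩
        · -- l = [0, m, 0]
          have hm2 : m ≤ 2 := by have := hB 1 (by simp); simpa using this
          have hm' : m = 2 := by omega
          subst hd; subst hm'
          exact ⟨[tileD1], by simp [tileD1],
            bulkShape_single (Or.inr (Or.inr (Or.inl rfl)))⟩
        · -- l = 0 :: m :: d :: e :: rest4
          have he : e = 0 := by
            have := hG.2.2.1 1 (by simpa using hm); simpa using this
          have hm2 : m ≤ 2 := by have := hB 1 (by simp); simpa using this
          have hm' : m = 2 := by omega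
          have h4 : rest4.getD 0 0 ≤ 1 := by
            have := hG.2.2.2 1 (by simpa using hm); simpa using this
          obtain ⟨T, hT1, hT2⟩ := ih rest4 (by simp at hl; omega)
            (goodList_tail (goodList_tail (goodList_tail (goodList_tail hG))))
            (bnd_tail (bnd_tail (bnd_tail (bnd_tail hB)))) h4
          subst hd; subst he; subst hm'
          exact ⟨tileD :: T, by simp [tileD, hT1], bulkShape_cons isBulk_D hT2⟩
    · -- head is m + 1, so = 1
      have hm : m = 0 := by
        have h1 : m + 1 ≤ 1 := by simpa using h0
        omega
      subst hm
      rcases rest with _ | ⟨d, rest2⟩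
      · exact ⟨[tileM1], by simp [tileM1], bulkShape_single (Or.inr (Or.inl rfl))⟩
      have hd : d = 0 := by
        have := hG.1 0 (by simp); simpa using this
      have h2 : rest2.getD 0 0 ≤ 1 := by
        have := hG.2.1 0 (by simp); simpa using this
      obtain ⟨T, hT1, hT2⟩ := ih rest2 (by simp at hl; omega)
        (goodList_tail (goodList_tail hG)) (bnd_tail (bnd_tail hB)) h2
      subst hd
      exact ⟨tileM :: T, by simp [tileM, hT1], bulkShape_cons isBulk_M hT2⟩

/-- Full construction of a BVMD tiling from the local conditions. -/
lemma full_tiling (l : List ℕ) (hlen : 5 ≤ l.length) (hG : GoodList l)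
    (hB : ∀ i, 1 ≤ i → i + 1 < l.length → l.getD i 0 ≤ 2) :
    ∃ T : List (List ℕ), T.flatten = l ∧ TilingShape T := by
  by_cases h0 : l.getD 0 0 ≤ 1
  · have hB' : ∀ i, i + 1 < l.length → l.getD i 0 ≤ 2 := by
      intro i hi
      rcases Nat.eq_zero_or_pos i with h | h
      · subst h; omega
      · exact hB i h hi
    obtain ⟨T, h1, h2⟩ := bulk_tiling l.length l le_rfl hG hB' h0
    refine ⟨T, h1, ⟨?_, fun i => ?_⟩⟩
    · intro h
      subst h
      simp only [List.flatten_nil] at h1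
      rw [← h1] at hlen
      simp at hlen
    · rcases h2 i with h | h
      · exact Or.inl h
      · exact Or.inr (Or.inr h)
  · push_neg at h0
    rcases l with _ | ⟨c0, _ | ⟨c1, _ | ⟨c2, rest⟩⟩⟩ <;> simp at hlen
    have hc0 : 2 ≤ c0 := by simp at h0; omega
    have hc1 : c1 = 0 := by have := hG.1 0 (by simp; omega); simpa using this
    have hc2 : c2 = 0 := by have := hG.2.2.1 0 (by simpa using hc0); simpa using this
    have h3 : rest.getD 0 0 ≤ 1 := by have := hG.2.2.2 0 (by simpa using hc0); simpa using this
    obtain ⟨T, hT1, hT2⟩ := bulk_tiling rest.length rest le_rfl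
      (goodList_tail (goodList_tail (goodList_tail hG)))
      (fun i hi => by have := hB (i + 3) (by omega) (by simp at hi ⊢; omega); simpa using this)
      h3
    subst hc1; subst hc2
    refine ⟨tileBl c0 :: T, by simp [tileBl, hT1], ⟨by simp, fun i => ?_⟩⟩
    match i with
    | ⟨0, _⟩ => exact Or.inr (Or.inl ⟨rfl, Or.inr ⟨c0, hc0, rfl⟩⟩)
    | ⟨j + 1, hj⟩ =>
      have hj' : j < T.length := by simpa using hj
      rcases hT2 ⟨j, hj'⟩ with h | ⟨he, hr⟩
      · exact Or.inl h
      · refine Or.inr (Or.inr ⟨?_, hr⟩)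
        have he' : j = T.length - 1 := he
        show j + 1 = (tileBl c0 :: T).length - 1
        simp only [List.length_cons]
        omega

lemma getD_map_range (f : ℕ → ℕ) (L i : ℕ) :
    ((List.range L).map f).getD i 0 = if i < L then f i else 0 := by
  by_cases h : i < L
  · rw [List.getD_eq_getElem _ _ (by simpa using h)]
    simp [h]
  · rw [List.getD_eq_default _ _ (by simpa using h)]
    simp [h]

end SupportLemmas
/-- **Lemma 2.3 (Support of Ground States).** For any interval `Λ = [a,b]` with `|Λ| ≥ 5`,
the ground-state space of `H_Λ` is supported on BVMD tilings: `𝒢_Λ ⊆ 𝒞_Λ`; equivalently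
any zero-energy state vanishes on every configuration not of the form `σ_Λ(T)`. -/
theorem support_of_ground_states (a b : ℤ) (κ : ℝ) (lam : ℂ) (hκ : 0 < κ) (hlam : lam ≠ 0)
    (hab : 5 ≤ b - a + 1) :
    ∀ ψ, IsGroundObc a b κ lam ψ → memC a b ψ := by
  intro ψ hg
  obtain ⟨⟨hfin, hsupp⟩, hzero⟩ := hg
  rw [energyObc] at hzero
  obtain ⟨hz1, hz2⟩ := add_eq_zero.mp hzero
  -- electrostatic part
  have hE : ∀ μ : Config, eObc a b μ ≠ 0 → ψ μ = 0 := by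
    intro μ hne
    have h := ENNReal.tsum_eq_zero.mp hz1 μ
    rcases mul_eq_zero.mp h with h' | h'
    · exact absurd (Nat.cast_eq_zero.mp h') hne
    · exact en2_eq_zero.mp h'
  -- hopping part
  have hq : ∀ x : ℤ, a + 1 ≤ x → x ≤ b - 1 → ∀ ν : Config, qOp lam x ψ ν = 0 := by
    have hκ' : ENNReal.ofReal κ ≠ 0 := (ENNReal.ofReal_pos.mpr hκ).ne'
    have hsum : ∑ x ∈ Finset.Icc (a + 1) (b - 1),
        ∑' ν : Config, en2 (qOp lam x ψ ν) = 0 := by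
      rcases mul_eq_zero.mp hz2 with h | h
      · exact absurd h hκ'
      · exact h
    intro x hx1 hx2 ν
    have h := Finset.sum_eq_zero_iff.mp hsum x (Finset.mem_Icc.mpr ⟨hx1, hx2⟩)
    exact en2_eq_zero.mp (ENNReal.tsum_eq_zero.mp h ν)
  refine ⟨hfin, ?_⟩
  intro μ hμ
  by_contra hψ
  have hsup : SupportedOn a b μ := by
    by_contra h
    exact hψ (hsupp μ h)
  have hs : ∀ x : ℤ, 1 ≤ μ x → a ≤ x ∧ x ≤ b := by
    intro x hx
    by_contra h
    have : μ x = 0 := hsup x (by omega)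
    omega
  -- local conditions
  have hA : ∀ x : ℤ, 1 ≤ μ x → μ (x + 1) = 0 := by
    intro x hx
    by_contra h
    have h1 : 1 ≤ μ (x + 1) := by omega
    obtain ⟨b1, _⟩ := hs x hx
    obtain ⟨_, b2⟩ := hs (x + 1) h1
    exact hψ (kill_adj hE b1 (by omega) hx h1)
  have hB : ∀ x : ℤ, a < x → x < b → μ x ≤ 2 := by
    intro x h1 h2
    by_contra h
    exact hψ (kill_big hE hq hlam h1 h2 (by omega))
  have hC1 : ∀ x : ℤ, 1 ≤ μ x → μ (x + 2) ≤ 1 := by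
    intro x hx
    by_contra h
    have h2 : 2 ≤ μ (x + 2) := by omega
    obtain ⟨b1, _⟩ := hs x hx
    obtain ⟨_, b2⟩ := hs (x + 2) (by omega)
    exact hψ (kill_C hE hq hlam b1 b2 hx (by omega) (Or.inr h2))
  have hC2 : ∀ x : ℤ, 2 ≤ μ x → μ (x + 2) = 0 := by
    intro x hx
    by_contra h
    have h2 : 1 ≤ μ (x + 2) := by omega
    obtain ⟨b1, _⟩ := hs x (by omega)
    obtain ⟨_, b2⟩ := hs (x + 2) h2
    exact hψ (kill_C hE hq hlam b1 b2 (by omega) h2 (Or.inl hx))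
  have hD : ∀ x : ℤ, 2 ≤ μ x → μ (x + 3) ≤ 1 := by
    intro x hx
    by_contra h
    have h2 : 2 ≤ μ (x + 3) := by omega
    obtain ⟨b1, _⟩ := hs x (by omega)
    obtain ⟨_, b2⟩ := hs (x + 3) (by omega)
    exact hψ (kill_D hE hq hlam (by omega) b1 b2 hx h2)
  -- the occupation list
  set L : ℕ := (b - a + 1).toNat with hL
  have hLZ : (L : ℤ) = b - a + 1 := Int.toNat_of_nonneg (by omega)
  set l : List ℕ := (List.range L).map (fun i : ℕ => μ (a + (i : ℤ))) with hl
  have hval : ∀ i : ℕ, l.getD i 0 = μ (a + i) := by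
    intro i
    rw [hl, getD_map_range]
    split
    · rfl
    · next h =>
      symm
      apply hsup
      right
      omega
  have hlen : l.length = L := by simp [hl]
  have hGood : GoodList l := by
    refine ⟨fun i hi => ?_, fun i hi => ?_, fun i hi => ?_, fun i hi => ?_⟩
    · rw [hval] at hi ⊢
      have := hA (a + i) hi
      rw [show (a + (i + 1 : ℕ) : ℤ) = a + i + 1 by push_cast; ring]
      exact this
    · rw [hval] at hi ⊢
      have := hC1 (a + i) hi
      rw [show (a + (i + 2 : ℕ) : ℤ) = a + i + 2 by push_cast; ring]
      exact this
    · rw [hval] at hi ⊢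
      have := hC2 (a + i) hi
      rw [show (a + (i + 2 : ℕ) : ℤ) = a + i + 2 by push_cast; ring]
      exact this
    · rw [hval] at hi ⊢
      have := hD (a + i) hi
      rw [show (a + (i + 3 : ℕ) : ℤ) = a + i + 3 by push_cast; ring]
      exact this
  have hBnd : ∀ i, 1 ≤ i → i + 1 < l.length → l.getD i 0 ≤ 2 := by
    intro i h1 h2
    rw [hval]
    rw [hlen] at h2
    exact hB (a + i) (by omega) (by omega)
  obtain ⟨T, hT1, hT2⟩ := full_tiling l (by omega) hGood hBnd
  have hBVMD : IsBVMD a b T := ⟨hT2, by rw [hT1, hlen]; omega⟩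
  apply hμ T hBVMD
  -- σ_Λ(T) = μ
  funext x
  rw [sigmaT, hT1]
  by_cases hax : a ≤ x
  · rw [listConfig, if_pos hax, hval]
    congr 1
    omega
  · rw [listConfig, if_neg hax]
    symm
    apply hsup
    left
    omega


end Bose
end

section
/- Suppose Λ = [a,b] and Λ' = [a,b−2] with |Λ'| ≥ 4. For any R ∈ ℛ_Λ^∞ ∖ ℛ_Λ^MM one has 𝒞_Λ(R) = 𝒞_{Λ'}(R') ⊗ |μ⟩, where σ_Λ(R) = (σ_{Λ'}(R'), μ) and R' ∈ ℛ_{Λ'}^∞. For any R ∈ ℛ_Λ^MM one has 𝒞_Λ(R) = (𝒞_{Λ'}(R') ⊗ |μ_R⟩) ⊕ (𝒞_{Λ'}(R'_D) ⊗ |μ_{R_D}⟩), where σ_Λ(R) = (σ_{Λ'}(R'), μ_R), σ_Λ(R_D) = (σ_{Λ'}(R'_D), μ_{R_D}), and both R', R'_D ∈ ℛ_{Λ'}^∞. -/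
open scoped ENNReal NNReal Classical

namespace Bose

/-! ### Auxiliary theory: characterization of TConn classes of root tilings -/

/-- Dimerizations of a tiling: replace disjoint adjacent `(M,M)` by `D` and `(M,M¹)` by `D¹`. -/
inductive Dimz : List (List ℕ) → List (List ℕ) → Prop
  | nil : Dimz [] []
  | keep (t : List ℕ) {R T : List (List ℕ)} : Dimz R T → Dimz (t :: R) (t :: T)
  | pair {R T : List (List ℕ)} : Dimz R T → Dimz (tileM :: tileM :: R) (tileD :: T)
  | pair1 {R T : List (List ℕ)} : Dimz R T → Dimz (tileM :: tileM1 :: R) (tileD1 :: T)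

theorem dimz_refl : ∀ R : List (List ℕ), Dimz R R
  | [] => Dimz.nil
  | t :: R => Dimz.keep t (dimz_refl R)

theorem dimz_append {R T R' T' : List (List ℕ)} (h : Dimz R T) (h' : Dimz R' T') :
    Dimz (R ++ R') (T ++ T') := by
  induction h with
  | nil => simpa using h'
  | keep t _ ih => exact Dimz.keep t ih
  | pair _ ih => exact Dimz.pair ih
  | pair1 _ ih => exact Dimz.pair1 ih

theorem dimz_nil_inv {T : List (List ℕ)} (h : Dimz [] T) : T = [] := by
  cases h; rfl

theorem dimz_flatten_length {R T : List (List ℕ)} (h : Dimz R T) :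
    T.flatten.length = R.flatten.length := by
  induction h with
  | nil => rfl
  | keep t _ ih => simp [ih]
  | pair _ ih => simp [tileM, tileD, ih]
  | pair1 _ ih => simp [tileM, tileM1, tileD1, ih]

theorem tileStep_cons (t : List ℕ) {A B : List (List ℕ)} (h : TileStep A B) :
    TileStep (t :: A) (t :: B) := by
  cases h with
  | dimer pre post => simpa [List.cons_append] using TileStep.dimer (t :: pre) post
  | dimer1 pre post => simpa [List.cons_append] using TileStep.dimer1 (t :: pre) post

theorem tconn_cons (t : List ℕ) {A B : List (List ℕ)} (h : TConn A B) :
    TConn (t :: A) (t :: B) := by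
  have h' : Relation.ReflTransGen (fun x y => TileStep x y ∨ TileStep y x) A B := h
  clear h
  induction h' with
  | refl => exact Relation.ReflTransGen.refl
  | tail _ hstep ih =>
    exact Relation.ReflTransGen.tail ih
      (hstep.imp (tileStep_cons t) (tileStep_cons t))

theorem dimz_toConn {R T : List (List ℕ)} (h : Dimz R T) : TConn T R := by
  induction h with
  | nil => exact Relation.ReflTransGen.refl
  | keep t _ ih => exact tconn_cons t ih
  | pair _ ih =>
    exact Relation.ReflTransGen.trans (tconn_cons tileD ih)
      (Relation.ReflTransGen.single (Or.inr (TileStep.dimer [] _)))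
  | pair1 _ ih =>
    exact Relation.ReflTransGen.trans (tconn_cons tileD1 ih)
      (Relation.ReflTransGen.single (Or.inr (TileStep.dimer1 [] _)))

theorem dimz_mm_to_d {S T : List (List ℕ)} (h : Dimz S T) :
    ∀ pre post, T = pre ++ [tileM, tileM] ++ post → Dimz S (pre ++ [tileD] ++ post) := by
  induction h with
  | nil => intro pre post h; simp at h
  | keep t hRT ih =>
    intro pre post heq
    cases pre with
    | nil =>
      simp only [List.nil_append, List.cons.injEq] at heq
      obtain ⟨rfl, rfl⟩ := heq
      cases hRT with
      | keep t₂ h₂ => exact Dimz.pair h₂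
    | cons p pre' =>
      simp only [List.cons_append, List.cons.injEq] at heq
      obtain ⟨rfl, rfl⟩ := heq
      simpa [List.cons_append] using Dimz.keep _ (ih pre' post rfl)
  | pair hRT ih =>
    intro pre post heq
    cases pre with
    | nil => simp [tileD, tileM] at heq
    | cons p pre' =>
      simp only [List.cons_append, List.cons.injEq] at heq
      obtain ⟨rfl, rfl⟩ := heq
      simpa [List.cons_append] using Dimz.pair (ih pre' post rfl)
  | pair1 hRT ih =>
    intro pre post heq
    cases pre with
    | nil => simp [tileD1, tileM] at heq
    | cons p pre' =>
      simp only [List.cons_append, List.cons.injEq] at heq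
      obtain ⟨rfl, rfl⟩ := heq
      simpa [List.cons_append] using Dimz.pair1 (ih pre' post rfl)
theorem dimz_mm1_to_d1 {S T : List (List ℕ)} (h : Dimz S T) :
    ∀ pre post, T = pre ++ [tileM, tileM1] ++ post → Dimz S (pre ++ [tileD1] ++ post) := by
  induction h with
  | nil => intro pre post h; simp at h
  | keep t hRT ih =>
    intro pre post heq
    cases pre with
    | nil =>
      simp only [List.nil_append, List.cons.injEq] at heq
      obtain ⟨rfl, rfl⟩ := heq
      cases hRT with
      | keep t₂ h₂ => exact Dimz.pair1 h₂
    | cons p pre' =>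
      simp only [List.cons_append, List.cons.injEq] at heq
      obtain ⟨rfl, rfl⟩ := heq
      simpa [List.cons_append] using Dimz.keep _ (ih pre' post rfl)
  | pair hRT ih =>
    intro pre post heq
    cases pre with
    | nil => simp [tileD, tileM] at heq
    | cons p pre' =>
      simp only [List.cons_append, List.cons.injEq] at heq
      obtain ⟨rfl, rfl⟩ := heq
      simpa [List.cons_append] using Dimz.pair (ih pre' post rfl)
  | pair1 hRT ih =>
    intro pre post heq
    cases pre with
    | nil => simp [tileD1, tileM] at heq
    | cons p pre' =>
      simp only [List.cons_append, List.cons.injEq] at heq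
      obtain ⟨rfl, rfl⟩ := heq
      simpa [List.cons_append] using Dimz.pair1 (ih pre' post rfl)

theorem dimz_d_to_mm {S T : List (List ℕ)} (h : Dimz S T) (hD : tileD ∉ S) :
    ∀ pre post, T = pre ++ [tileD] ++ post → Dimz S (pre ++ [tileM, tileM] ++ post) := by
  induction h with
  | nil => intro pre post h; simp at h
  | keep t hRT ih =>
    rename_i R₁ T₁
    intro pre post heq
    have hD₁ : tileD ∉ R₁ := fun hm => hD (List.mem_cons_of_mem _ hm)
    cases pre with
    | nil =>
      simp only [List.nil_append, List.cons.injEq] at heq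
      obtain ⟨rfl, rfl⟩ := heq
      exact absurd List.mem_cons_self hD
    | cons p pre' =>
      simp only [List.cons_append, List.cons.injEq] at heq
      obtain ⟨rfl, rfl⟩ := heq
      simpa [List.cons_append] using Dimz.keep _ (ih hD₁ pre' post rfl)
  | pair hRT ih =>
    rename_i R₁ T₁
    intro pre post heq
    have hD' : tileD ∉ R₁ := fun hm => hD (by simp [hm])
    cases pre with
    | nil =>
      simp only [List.nil_append, List.cons.injEq] at heq
      obtain ⟨-, rfl⟩ := heq
      exact Dimz.keep _ (Dimz.keep _ hRT)
    | cons p pre' =>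
      simp only [List.cons_append, List.cons.injEq] at heq
      obtain ⟨rfl, rfl⟩ := heq
      simpa [List.cons_append] using Dimz.pair (ih hD' pre' post rfl)
  | pair1 hRT ih =>
    rename_i R₁ T₁
    intro pre post heq
    have hD' : tileD ∉ R₁ := fun hm => hD (by simp [hm])
    cases pre with
    | nil => simp [tileD, tileD1] at heq
    | cons p pre' =>
      simp only [List.cons_append, List.cons.injEq] at heq
      obtain ⟨rfl, rfl⟩ := heq
      simpa [List.cons_append] using Dimz.pair1 (ih hD' pre' post rfl)

theorem dimz_d1_to_mm1 {S T : List (List ℕ)} (h : Dimz S T) (hD : tileD1 ∉ S) :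
    ∀ pre post, T = pre ++ [tileD1] ++ post → Dimz S (pre ++ [tileM, tileM1] ++ post) := by
  induction h with
  | nil => intro pre post h; simp at h
  | keep t hRT ih =>
    rename_i R₁ T₁
    intro pre post heq
    have hD₁ : tileD1 ∉ R₁ := fun hm => hD (List.mem_cons_of_mem _ hm)
    cases pre with
    | nil =>
      simp only [List.nil_append, List.cons.injEq] at heq
      obtain ⟨rfl, rfl⟩ := heq
      exact absurd List.mem_cons_self hD
    | cons p pre' =>
      simp only [List.cons_append, List.cons.injEq] at heq
      obtain ⟨rfl, rfl⟩ := heq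
      simpa [List.cons_append] using Dimz.keep _ (ih hD₁ pre' post rfl)
  | pair hRT ih =>
    rename_i R₁ T₁
    intro pre post heq
    have hD' : tileD1 ∉ R₁ := fun hm => hD (by simp [hm])
    cases pre with
    | nil => simp [tileD, tileD1] at heq
    | cons p pre' =>
      simp only [List.cons_append, List.cons.injEq] at heq
      obtain ⟨rfl, rfl⟩ := heq
      simpa [List.cons_append] using Dimz.pair (ih hD' pre' post rfl)
  | pair1 hRT ih =>
    rename_i R₁ T₁
    intro pre post heq
    have hD' : tileD1 ∉ R₁ := fun hm => hD (by simp [hm])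
    cases pre with
    | nil =>
      simp only [List.nil_append, List.cons.injEq] at heq
      obtain ⟨-, rfl⟩ := heq
      exact Dimz.keep _ (Dimz.keep _ hRT)
    | cons p pre' =>
      simp only [List.cons_append, List.cons.injEq] at heq
      obtain ⟨rfl, rfl⟩ := heq
      simpa [List.cons_append] using Dimz.pair1 (ih hD' pre' post rfl)

/-- The class of a root tiling under the substitution rules is exactly its set of
dimerizations. -/
theorem tconn_iff_dimz {R : List (List ℕ)} (hD : tileD ∉ R) (hD1 : tileD1 ∉ R)
    {T : List (List ℕ)} : TConn T R ↔ Dimz R T := by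
  constructor
  · intro h
    have h' : Relation.ReflTransGen (fun x y => TileStep x y ∨ TileStep y x) T R := h
    clear h
    induction h' using Relation.ReflTransGen.head_induction_on with
    | refl => exact dimz_refl R
    | head hstep _ ih =>
      rcases hstep with hs | hs
      · cases hs with
        | dimer pre post => exact dimz_d_to_mm ih hD pre post rfl
        | dimer1 pre post => exact dimz_d1_to_mm1 ih hD1 pre post rfl
      · cases hs with
        | dimer pre post => exact dimz_mm_to_d ih pre post rfl
        | dimer1 pre post => exact dimz_mm1_to_d1 ih pre post rfl
  · exact dimz_toConn
theorem dimz_snoc_other {t : List ℕ} (ht : t ≠ tileM) (ht1 : t ≠ tileM1) :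
    ∀ {S T : List (List ℕ)}, Dimz S T → ∀ {R₀ : List (List ℕ)}, S = R₀ ++ [t] →
      ∃ T₀, T = T₀ ++ [t] ∧ Dimz R₀ T₀ := by
  intro S T h
  induction h with
  | nil => intro R₀ hR; simp at hR
  | keep s hRT ih =>
    rename_i R₁ T₁
    intro R₀ hR
    cases R₀ with
    | nil =>
      simp only [List.nil_append, List.cons.injEq] at hR
      obtain ⟨rfl, rfl⟩ := hR
      exact ⟨[], by simp [dimz_nil_inv hRT], Dimz.nil⟩
    | cons x R₀' =>
      simp only [List.cons_append, List.cons.injEq] at hR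
      obtain ⟨rfl, rfl⟩ := hR
      obtain ⟨T₀, rfl, hd⟩ := ih rfl
      exact ⟨s :: T₀, by simp, Dimz.keep s hd⟩
  | pair hRT ih =>
    rename_i R₁ T₁
    intro R₀ hR
    match R₀, hR with
    | [], hR => simp at hR
    | [x], hR => simp only [List.cons_append, List.nil_append, List.cons.injEq] at hR; exact absurd hR.2.1.symm ht
    | x :: y :: R₀', hR =>
      simp only [List.cons_append, List.cons.injEq] at hR
      obtain ⟨rfl, rfl, rfl⟩ := hR
      obtain ⟨T₀, rfl, hd⟩ := ih rfl
      exact ⟨tileD :: T₀, by simp, Dimz.pair hd⟩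
  | pair1 hRT ih =>
    rename_i R₁ T₁
    intro R₀ hR
    match R₀, hR with
    | [], hR => simp at hR
    | [x], hR => simp only [List.cons_append, List.nil_append, List.cons.injEq] at hR; exact absurd hR.2.1.symm ht1
    | x :: y :: R₀', hR =>
      simp only [List.cons_append, List.cons.injEq] at hR
      obtain ⟨rfl, rfl, rfl⟩ := hR
      obtain ⟨T₀, rfl, hd⟩ := ih rfl
      exact ⟨tileD1 :: T₀, by simp, Dimz.pair1 hd⟩

theorem dimz_snoc_M :
    ∀ {S T : List (List ℕ)}, Dimz S T → ∀ {R₀ : List (List ℕ)}, S = R₀ ++ [tileM] →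
      (∃ T₀, T = T₀ ++ [tileM] ∧ Dimz R₀ T₀) ∨
      (∃ R₁ T₁, R₀ = R₁ ++ [tileM] ∧ T = T₁ ++ [tileD] ∧ Dimz R₁ T₁) := by
  intro S T h
  induction h with
  | nil => intro R₀ hR; simp at hR
  | keep s hRT ih =>
    rename_i R₁ T₁
    intro R₀ hR
    cases R₀ with
    | nil =>
      simp only [List.nil_append, List.cons.injEq] at hR
      obtain ⟨rfl, rfl⟩ := hR
      exact Or.inl ⟨[], by simp [dimz_nil_inv hRT], Dimz.nil⟩
    | cons x R₀' =>
      simp only [List.cons_append, List.cons.injEq] at hR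
      obtain ⟨rfl, rfl⟩ := hR
      rcases ih rfl with ⟨T₀, rfl, hd⟩ | ⟨Ra, Ta, rfl, rfl, hd⟩
      · exact Or.inl ⟨s :: T₀, by simp, Dimz.keep s hd⟩
      · exact Or.inr ⟨s :: Ra, s :: Ta, by simp, by simp, Dimz.keep s hd⟩
  | pair hRT ih =>
    rename_i R₁ T₁
    intro R₀ hR
    match R₀, hR with
    | [], hR => simp at hR
    | [x], hR =>
      simp only [List.cons_append, List.nil_append, List.cons.injEq] at hR
      obtain ⟨rfl, rfl⟩ : tileM = x ∧ R₁ = [] := by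
        constructor
        · exact hR.1
        · exact hR.2.2
      have := dimz_nil_inv hRT
      subst this
      exact Or.inr ⟨[], [], rfl, rfl, Dimz.nil⟩
    | x :: y :: R₀', hR =>
      simp only [List.cons_append, List.cons.injEq] at hR
      obtain ⟨rfl, rfl, rfl⟩ := hR
      rcases ih rfl with ⟨T₀, rfl, hd⟩ | ⟨Ra, Ta, rfl, rfl, hd⟩
      · exact Or.inl ⟨tileD :: T₀, by simp, Dimz.pair hd⟩
      · exact Or.inr ⟨tileM :: tileM :: Ra, tileD :: Ta, by simp, by simp, Dimz.pair hd⟩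
  | pair1 hRT ih =>
    rename_i R₁ T₁
    intro R₀ hR
    match R₀, hR with
    | [], hR => simp at hR
    | [x], hR =>
      simp only [List.cons_append, List.nil_append, List.cons.injEq] at hR
      exact absurd hR.2.1 (by simp [tileM, tileM1])
    | x :: y :: R₀', hR =>
      simp only [List.cons_append, List.cons.injEq] at hR
      obtain ⟨rfl, rfl, rfl⟩ := hR
      rcases ih rfl with ⟨T₀, rfl, hd⟩ | ⟨Ra, Ta, rfl, rfl, hd⟩
      · exact Or.inl ⟨tileD1 :: T₀, by simp, Dimz.pair1 hd⟩
      · exact Or.inr ⟨tileM :: tileM1 :: Ra, tileD1 :: Ta, by simp, by simp, Dimz.pair1 hd⟩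

theorem dimz_snoc_M1 :
    ∀ {S T : List (List ℕ)}, Dimz S T → ∀ {R₀ : List (List ℕ)}, S = R₀ ++ [tileM1] →
      (∃ T₀, T = T₀ ++ [tileM1] ∧ Dimz R₀ T₀) ∨
      (∃ R₁ T₁, R₀ = R₁ ++ [tileM] ∧ T = T₁ ++ [tileD1] ∧ Dimz R₁ T₁) := by
  intro S T h
  induction h with
  | nil => intro R₀ hR; simp at hR
  | keep s hRT ih =>
    rename_i R₁ T₁
    intro R₀ hR
    cases R₀ with
    | nil =>
      simp only [List.nil_append, List.cons.injEq] at hR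
      obtain ⟨rfl, rfl⟩ := hR
      exact Or.inl ⟨[], by simp [dimz_nil_inv hRT], Dimz.nil⟩
    | cons x R₀' =>
      simp only [List.cons_append, List.cons.injEq] at hR
      obtain ⟨rfl, rfl⟩ := hR
      rcases ih rfl with ⟨T₀, rfl, hd⟩ | ⟨Ra, Ta, rfl, rfl, hd⟩
      · exact Or.inl ⟨s :: T₀, by simp, Dimz.keep s hd⟩
      · exact Or.inr ⟨s :: Ra, s :: Ta, by simp, by simp, Dimz.keep s hd⟩
  | pair hRT ih =>
    rename_i R₁ T₁
    intro R₀ hR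
    match R₀, hR with
    | [], hR => simp at hR
    | [x], hR =>
      simp only [List.cons_append, List.nil_append, List.cons.injEq] at hR
      exact absurd hR.2.1 (by simp [tileM, tileM1])
    | x :: y :: R₀', hR =>
      simp only [List.cons_append, List.cons.injEq] at hR
      obtain ⟨rfl, rfl, rfl⟩ := hR
      rcases ih rfl with ⟨T₀, rfl, hd⟩ | ⟨Ra, Ta, rfl, rfl, hd⟩
      · exact Or.inl ⟨tileD :: T₀, by simp, Dimz.pair hd⟩
      · exact Or.inr ⟨tileM :: tileM :: Ra, tileD :: Ta, by simp, by simp, Dimz.pair hd⟩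
  | pair1 hRT ih =>
    rename_i R₁ T₁
    intro R₀ hR
    match R₀, hR with
    | [], hR => simp at hR
    | [x], hR =>
      simp only [List.cons_append, List.nil_append, List.cons.injEq] at hR
      obtain ⟨rfl, rfl⟩ : tileM = x ∧ R₁ = [] := by
        constructor
        · exact hR.1
        · exact hR.2.2
      have := dimz_nil_inv hRT
      subst this
      exact Or.inr ⟨[], [], rfl, rfl, Dimz.nil⟩
    | x :: y :: R₀', hR =>
      simp only [List.cons_append, List.cons.injEq] at hR
      obtain ⟨rfl, rfl, rfl⟩ := hR
      rcases ih rfl with ⟨T₀, rfl, hd⟩ | ⟨Ra, Ta, rfl, rfl, hd⟩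
      · exact Or.inl ⟨tileD1 :: T₀, by simp, Dimz.pair1 hd⟩
      · exact Or.inr ⟨tileM :: tileM1 :: Ra, tileD1 :: Ta, by simp, by simp, Dimz.pair1 hd⟩
theorem embedL_apply (a' b' : ℤ) (tmpl : Config) (φ : Config → ℂ) (ν : Config) :
    embedL a' b' tmpl φ ν =
      if ∀ x : ℤ, x < a' ∨ b' < x → ν x = tmpl x then φ (restrictC a' b' ν) else 0 := rfl

theorem shape_build (f : List ℕ) (m : List (List ℕ)) (l : List ℕ)
    (hf : IsLeftTile f) (hl : IsRightTile l) (hm : ∀ t ∈ m, IsBulkTile t) :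
    TilingShape (f :: (m ++ [l])) := by
  have hL2 : (f :: (m ++ [l])).length = m.length + 2 := by simp
  refine ⟨by simp, ?_⟩
  rintro ⟨i, hi⟩
  simp only [List.get_eq_getElem]
  match i, hi with
  | 0, hi => exact Or.inr (Or.inl ⟨rfl, by simpa using hf⟩)
  | j + 1, hi =>
    by_cases hjm : j < m.length
    · have he : (f :: (m ++ [l]))[j + 1]'hi = m[j] := by
        rw [List.getElem_cons_succ]
        exact List.getElem_append_left hjm
      rw [he]
      exact Or.inl (hm _ (List.getElem_mem _))
    · have hj' : j = m.length := by omega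
      subst hj'
      have he : (f :: (m ++ [l]))[m.length + 1]'hi = l := by
        rw [List.getElem_cons_succ]
        exact List.getElem_concat_length rfl _
      rw [he]
      exact Or.inr (Or.inr ⟨by omega, hl⟩)

theorem shape_mid {f : List ℕ} {m : List (List ℕ)} {l : List ℕ}
    (hT : TilingShape (f :: (m ++ [l]))) : ∀ t ∈ m, IsBulkTile t := by
  intro t ht
  obtain ⟨j, hj, rfl⟩ := List.getElem_of_mem ht
  have hL2 : (f :: (m ++ [l])).length = m.length + 2 := by simp
  have hi : j + 1 < (f :: (m ++ [l])).length := by omega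
  have he : (f :: (m ++ [l])).get ⟨j + 1, hi⟩ = m[j] := by
    simp only [List.get_eq_getElem, List.getElem_cons_succ]
    exact List.getElem_append_left hj
  rcases hT.2 ⟨j + 1, hi⟩ with hb | ⟨h0, _⟩ | ⟨hl', _⟩
  · rwa [he] at hb
  · exact absurd (show j + 1 = 0 from h0) (by omega)
  · have hl'' : j + 1 = (f :: (m ++ [l])).length - 1 := hl'
    rw [hL2] at hl''
    omega

theorem restrict_sigma' (a b : ℤ) (R R' : List (List ℕ)) (s : List ℕ)
    (hflat : R.flatten = R'.flatten ++ s)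
    (hlen : (R'.flatten.length : ℤ) = b - 2 - a + 1) :
    restrictC a (b - 2) (sigmaT a R) = sigmaT a R' := by
  funext x
  simp only [restrictC, sigmaT, listConfig]
  by_cases hx : a ≤ x ∧ x ≤ b - 2
  · rw [if_pos hx, if_pos hx.1, if_pos hx.1, hflat, List.getD_append]
    omega
  · rw [if_neg hx]
    by_cases hax : a ≤ x
    · rw [if_pos hax, List.getD_eq_default]
      omega
    · rw [if_neg hax]

theorem embed_ket_eq (a b : ℤ) (R T T' : List (List ℕ)) (s LR : List ℕ)
    (hT : T.flatten = T'.flatten ++ s) (hR : R.flatten = LR ++ s)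
    (hLR : LR.length = T'.flatten.length) (hs : s.length = 2)
    (hlen : (T'.flatten.length : ℤ) = b - 2 - a + 1) :
    embedL a (b - 2) (sigmaT a R) (ket (sigmaT a T')) = ket (sigmaT a T) := by
  have key : ∀ x : ℤ, x < a ∨ b - 2 < x → sigmaT a T x = sigmaT a R x := by
    intro x hx
    simp only [sigmaT, listConfig]
    by_cases hax : a ≤ x
    · simp only [if_pos hax]
      have hxb : b - 2 < x := by rcases hx with hx | hx <;> omega
      rw [hT, hR]
      have e1 : (T'.flatten ++ s).getD (x - a).toNat 0
          = s.getD ((x - a).toNat - T'.flatten.length) 0 := by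
        apply List.getD_append_right
        omega
      have e2 : (LR ++ s).getD (x - a).toNat 0
          = s.getD ((x - a).toNat - LR.length) 0 := by
        apply List.getD_append_right
        omega
      rw [e1, e2, hLR]
    · simp only [if_neg hax]
  have hin : ∀ x : ℤ, a ≤ x → x ≤ b - 2 → sigmaT a T' x = sigmaT a T x := by
    intro x h1 h2
    simp only [sigmaT, listConfig]
    rw [if_pos h1, if_pos h1, hT, List.getD_append]
    omega
  have hres := restrict_sigma' a b T T' s hT hlen
  funext ν
  rw [embedL_apply]
  by_cases hν : ν = sigmaT a T
  · subst hν
    rw [if_pos key, hres]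
    simp [ket]
  · have : ket (sigmaT a T) ν = 0 := by simp [ket, hν]
    rw [this]
    by_cases hcond : ∀ x : ℤ, x < a ∨ b - 2 < x → ν x = sigmaT a R x
    · rw [if_pos hcond]
      have : restrictC a (b - 2) ν ≠ sigmaT a T' := by
        intro heq
        apply hν
        funext x
        by_cases hx : a ≤ x ∧ x ≤ b - 2
        · have : restrictC a (b - 2) ν x = ν x := by unfold restrictC; rw [if_pos hx]
          rw [← this, heq, hin x hx.1 hx.2]
        · have hx' : x < a ∨ b - 2 < x := by omega
          rw [hcond x hx', key x hx']
      simp [ket, this]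
    · rw [if_neg hcond]

theorem monCount_snoc (Y : List (List ℕ)) (x : List ℕ) :
    monCount (Y ++ [x]) = if x = tileM ∨ x = tileM1 then monCount Y + 1 else 0 := by
  unfold monCount
  rw [List.reverse_append]
  by_cases hx : x = tileM ∨ x = tileM1
  · rw [if_pos hx]
    have hb : (x == tileM || x == tileM1) = true := by
      rcases hx with rfl | rfl <;> simp
    simp [List.takeWhile_cons, hb, Nat.add_comm]
  · rw [if_neg hx]
    push_neg at hx
    have hb : (x == tileM || x == tileM1) = false := by
      simp [hx.1, hx.2]
    simp [List.takeWhile_cons, hb]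

theorem cspan_eq_span_dimz (a : ℤ) {R : List (List ℕ)} (hD : tileD ∉ R) (hD1 : tileD1 ∉ R) :
    Cspan a R = Submodule.span ℂ {ψ | ∃ T, Dimz R T ∧ ψ = ket (sigmaT a T)} := by
  unfold Cspan
  congr 1
  ext ψ
  exact ⟨fun ⟨T, hT, he⟩ => ⟨T, (tconn_iff_dimz hD hD1).mp hT, he⟩,
    fun ⟨T, hT, he⟩ => ⟨T, (tconn_iff_dimz hD hD1).mpr hT, he⟩⟩

theorem inner_embed_zero {a b' : ℤ} {t1 t2 : Config} {p : ℤ} (hp : p < a ∨ b' < p)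
    (hne : t1 p ≠ t2 p) (φ₀ χ₀ : Config → ℂ) :
    inner' (embedL a b' t1 φ₀) (embedL a b' t2 χ₀) = 0 := by
  unfold inner'
  have hz : ∀ ν : Config,
      (starRingEnd ℂ) ((embedL a b' t1 φ₀) ν) * (embedL a b' t2 χ₀) ν = 0 := by
    intro ν
    by_cases h1 : ∀ x : ℤ, x < a ∨ b' < x → ν x = t1 x
    · by_cases h2 : ∀ x : ℤ, x < a ∨ b' < x → ν x = t2 x
      · exact absurd ((h1 p hp).symm.trans (h2 p hp)) hne
      · rw [embedL_apply a b' t2 χ₀ ν, if_neg h2, mul_zero]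
    · rw [embedL_apply a b' t1 φ₀ ν, if_neg h1, map_zero, zero_mul]
  calc ∑' ν : Config, (starRingEnd ℂ) ((embedL a b' t1 φ₀) ν) * (embedL a b' t2 χ₀) ν
      = ∑' _ : Config, (0 : ℂ) := tsum_congr hz
    _ = 0 := tsum_zero
theorem snoc_ne {X Y : List (List ℕ)} {u v : List ℕ} (h : X ++ [u] = Y ++ [v]) : u = v := by
  have h2 := congrArg List.getLast? h
  rwa [List.getLast?_concat, List.getLast?_concat, Option.some.injEq] at h2

theorem sigma_at (a b : ℤ) (X : List (List ℕ)) (L : List ℕ) (u v : ℕ)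
    (hX : X.flatten = L ++ [u, v]) (hL : (L.length : ℤ) = b - 1 - a) :
    sigmaT a X (b - 1) = u ∧ sigmaT a X b = v := by
  have ha1 : a ≤ b - 1 := by omega
  constructor
  · simp only [sigmaT, listConfig]
    rw [if_pos ha1, hX, List.getD_append_right _ _ _ _ (by omega),
      show (b - 1 - a).toNat - L.length = 0 by omega]
    rfl
  · simp only [sigmaT, listConfig]
    rw [if_pos (by omega : a ≤ b), hX, List.getD_append_right _ _ _ _ (by omega),
      show (b - a).toNat - L.length = 1 by omega]
    rfl

theorem rootinf_build (a b' : ℤ) (f : List ℕ) (m : List (List ℕ)) (l : List ℕ)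
    (hf : f = tileV ∨ f = tileM ∨ f = tileBl 2)
    (hl : l = tileV ∨ l = tileM ∨ l = tileM1 ∨ l = tileBr 2)
    (hm : ∀ t ∈ m, t = tileV ∨ t = tileM)
    (hlen : (((f :: (m ++ [l])).flatten.length : ℤ)) = b' - a + 1) :
    IsRootInf a b' (f :: (m ++ [l])) := by
  have hlast : (f :: (m ++ [l])).getLast? = some l := by
    rw [show f :: (m ++ [l]) = (f :: m) ++ [l] by simp]
    exact List.getLast?_concat
  have hleft : IsLeftTile f := by
    rcases hf with rfl | rfl | rfl
    · exact Or.inl (Or.inl rfl)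
    · exact Or.inl (Or.inr (Or.inl rfl))
    · exact Or.inr ⟨2, le_refl 2, rfl⟩
  have hright : IsRightTile l := by
    rcases hl with rfl | rfl | rfl | rfl
    · exact Or.inl (Or.inl rfl)
    · exact Or.inl (Or.inr (Or.inl rfl))
    · exact Or.inr (Or.inl rfl)
    · exact Or.inr (Or.inr (Or.inr ⟨2, le_refl 2, rfl⟩))
  have hbulk : ∀ t ∈ m, IsBulkTile t := by
    intro t ht
    rcases hm t ht with rfl | rfl
    · exact Or.inl rfl
    · exact Or.inr (Or.inl rfl)
  refine ⟨⟨⟨shape_build f m l hleft hright hbulk, hlen⟩, ?_, ?_⟩, ?_, ?_⟩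
  · intro hmem
    rcases List.mem_cons.mp hmem with hc | hc
    · rcases hf with rfl | rfl | rfl <;> exact absurd hc (by decide)
    · rcases List.mem_append.mp hc with hc | hc
      · rcases hm _ hc with h2 | h2 <;> exact absurd h2 (by decide)
      · rcases List.mem_singleton.mp hc with rfl
        rcases hl with h | h | h | h <;> exact absurd h (by decide)
  · intro hmem
    rcases List.mem_cons.mp hmem with hc | hc
    · rcases hf with rfl | rfl | rfl <;> exact absurd hc (by decide)
    · rcases List.mem_append.mp hc with hc | hc
      · rcases hm _ hc with h2 | h2 <;> exact absurd h2 (by decide)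
      · rcases List.mem_singleton.mp hc with rfl
        rcases hl with h | h | h | h <;> exact absurd h (by decide)
  · rcases hf with rfl | rfl | rfl
    · exact Or.inl rfl
    · exact Or.inr (Or.inl rfl)
    · exact Or.inr (Or.inr rfl)
  · rw [hlast]
    rcases hl with rfl | rfl | rfl | rfl
    · exact Or.inl rfl
    · exact Or.inr (Or.inl rfl)
    · exact Or.inr (Or.inr (Or.inl rfl))
    · exact Or.inr (Or.inr (Or.inr rfl))

theorem root_decomp {a b : ℤ} (h6 : 6 ≤ b - a + 1) {R : List (List ℕ)}
    (hR : IsRootInf a b R) :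
    ∃ f m l, R = f :: (m ++ [l]) ∧
      (f = tileV ∨ f = tileM ∨ f = tileBl 2) ∧
      (l = tileV ∨ l = tileM ∨ l = tileM1 ∨ l = tileBr 2) ∧
      (∀ t ∈ m, t = tileV ∨ t = tileM) ∧
      tileD ∉ R ∧ tileD1 ∉ R ∧ ((R.flatten.length : ℤ) = b - a + 1) := by
  obtain ⟨⟨⟨hshape, hflen⟩, hD, hD1⟩, hhead, hlast⟩ := hR
  cases R with
  | nil => rcases hhead with h | h | h <;> simp at h
  | cons f rest =>
    have hf : f = tileV ∨ f = tileM ∨ f = tileBl 2 := by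
      rcases hhead with h | h | h
      · exact Or.inl (by simpa using h)
      · exact Or.inr (Or.inl (by simpa using h))
      · exact Or.inr (Or.inr (by simpa using h))
    cases rest with
    | nil =>
      exfalso
      have : (f.length : ℤ) = b - a + 1 := by simpa using hflen
      rcases hf with rfl | rfl | rfl <;> (simp [tileV, tileM, tileBl] at this; omega)
    | cons t2 rest2 =>
      rcases (t2 :: rest2).eq_nil_or_concat' with habs | ⟨m, l, hm⟩
      · simp at habs
      · refine ⟨f, m, l, by rw [hm], hf, ?_, ?_, hD, hD1, hflen⟩
        · have hgl : (f :: (t2 :: rest2)).getLast? = some l := by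
            rw [hm, show f :: (m ++ [l]) = (f :: m) ++ [l] by simp]
            exact List.getLast?_concat
          rcases hlast with h | h | h | h
          · exact Or.inl (by rw [hgl] at h; exact (Option.some.injEq _ _ ▸ h :)) 
          · exact Or.inr (Or.inl (by rw [hgl] at h; simpa using h))
          · exact Or.inr (Or.inr (Or.inl (by rw [hgl] at h; simpa using h)))
          · exact Or.inr (Or.inr (Or.inr (by rw [hgl] at h; simpa using h)))
        · intro t ht
          have hbulk : IsBulkTile t := by
            apply shape_mid (f := f) (m := m) (l := l) _ t ht
            rw [← hm]
            exact hshape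
          rcases hbulk with h | h | h
          · exact Or.inl h
          · exact Or.inr h
          · exfalso
            apply hD
            rw [hm]
            exact List.mem_cons_of_mem _ (List.mem_append_left _ (h ▸ ht))

theorem cspan_map_rel (a b : ℤ) (R R' : List (List ℕ))
    (hD : tileD ∉ R) (hD1 : tileD1 ∉ R) (hD' : tileD ∉ R') (hD1' : tileD1 ∉ R')
    (s : List ℕ) (hs : s.length = 2)
    (hR : R.flatten = R'.flatten ++ s)
    (hlen' : (R'.flatten.length : ℤ) = b - 2 - a + 1)
    (hfwd : ∀ T', Dimz R' T' → ∃ T, Dimz R T ∧ T.flatten = T'.flatten ++ s)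
    (hbwd : ∀ T, Dimz R T → ∃ T', Dimz R' T' ∧ T.flatten = T'.flatten ++ s) :
    Cspan a R = (Cspan a R').map (embedL a (b - 2) (sigmaT a R)) := by
  rw [cspan_eq_span_dimz a hD hD1, cspan_eq_span_dimz a hD' hD1', Submodule.map_span]
  congr 1
  ext ψ
  constructor
  · rintro ⟨T, hT, rfl⟩
    obtain ⟨T', hT', hflat⟩ := hbwd T hT
    exact ⟨ket (sigmaT a T'), ⟨T', hT', rfl⟩,
      embed_ket_eq a b R T T' s R'.flatten hflat hR (dimz_flatten_length hT').symm hs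
        (by rw [dimz_flatten_length hT']; exact hlen')⟩
  · rintro ⟨ψ', ⟨T', hT', rfl⟩, rfl⟩
    obtain ⟨T, hT, hflat⟩ := hfwd T' hT'
    exact ⟨T, hT,
      embed_ket_eq a b R T T' s R'.flatten hflat hR (dimz_flatten_length hT').symm hs
        (by rw [dimz_flatten_length hT']; exact hlen')⟩

theorem cspan_map_pair (a b : ℤ) (R Rd R' R'' : List (List ℕ))
    (hD : tileD ∉ R) (hD1 : tileD1 ∉ R)
    (hD' : tileD ∉ R') (hD1' : tileD1 ∉ R') (hD'' : tileD ∉ R'') (hD1'' : tileD1 ∉ R'')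
    (s s' : List ℕ) (hs : s.length = 2) (hs' : s'.length = 2)
    (hR : R.flatten = R'.flatten ++ s)
    (hRd : Rd.flatten = R''.flatten ++ s')
    (hlen' : (R'.flatten.length : ℤ) = b - 2 - a + 1)
    (hlen'' : (R''.flatten.length : ℤ) = b - 2 - a + 1)
    (hfwd' : ∀ T', Dimz R' T' → ∃ T, Dimz R T ∧ T.flatten = T'.flatten ++ s)
    (hfwd'' : ∀ T'', Dimz R'' T'' → ∃ T, Dimz R T ∧ T.flatten = T''.flatten ++ s')
    (hbwd : ∀ T, Dimz R T →
      (∃ T', Dimz R' T' ∧ T.flatten = T'.flatten ++ s) ∨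
      (∃ T'', Dimz R'' T'' ∧ T.flatten = T''.flatten ++ s')) :
    Cspan a R = (Cspan a R').map (embedL a (b - 2) (sigmaT a R)) ⊔
      (Cspan a R'').map (embedL a (b - 2) (sigmaT a Rd)) := by
  rw [cspan_eq_span_dimz a hD hD1, cspan_eq_span_dimz a hD' hD1',
    cspan_eq_span_dimz a hD'' hD1'', Submodule.map_span, Submodule.map_span,
    ← Submodule.span_union]
  congr 1
  ext ψ
  constructor
  · rintro ⟨T, hT, rfl⟩
    rcases hbwd T hT with ⟨T', hT', hflat⟩ | ⟨T'', hT'', hflat⟩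
    · exact Or.inl ⟨ket (sigmaT a T'), ⟨T', hT', rfl⟩,
        embed_ket_eq a b R T T' s R'.flatten hflat hR (dimz_flatten_length hT').symm hs
          (by rw [dimz_flatten_length hT']; exact hlen')⟩
    · exact Or.inr ⟨ket (sigmaT a T''), ⟨T'', hT'', rfl⟩,
        embed_ket_eq a b Rd T T'' s' R''.flatten hflat hRd (dimz_flatten_length hT'').symm hs'
          (by rw [dimz_flatten_length hT'']; exact hlen'')⟩
  · rintro (⟨ψ', ⟨T', hT', rfl⟩, rfl⟩ | ⟨ψ', ⟨T'', hT'', rfl⟩, rfl⟩)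
    · obtain ⟨T, hT, hflat⟩ := hfwd' T' hT'
      exact ⟨T, hT,
        embed_ket_eq a b R T T' s R'.flatten hflat hR (dimz_flatten_length hT').symm hs
          (by rw [dimz_flatten_length hT']; exact hlen')⟩
    · obtain ⟨T, hT, hflat⟩ := hfwd'' T'' hT''
      exact ⟨T, hT,
        embed_ket_eq a b Rd T T'' s' R''.flatten hflat hRd (dimz_flatten_length hT'').symm hs'
          (by rw [dimz_flatten_length hT'']; exact hlen'')⟩

/-- **Lemma 3.5 (BVMD-Space Decomposition).** Let `Λ = [a,b]` and `Λ' = [a,b−2]` with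
`|Λ'| ≥ 4`. For `R ∈ ℛ_Λ^∞ ∖ ℛ_Λ^MM`, `𝒞_Λ(R) = 𝒞_{Λ'}(R') ⊗ |μ⟩` with
`σ_Λ(R) = (σ_{Λ'}(R'), μ)`; for `R ∈ ℛ_Λ^MM`,
`𝒞_Λ(R) = (𝒞_{Λ'}(R') ⊗ |μ_R⟩) ⊕ (𝒞_{Λ'}(R'_D) ⊗ |μ_{R_D}⟩)`. -/
theorem bvmd_space_decomposition (a b : ℤ) (h : 4 ≤ (b - 2) - a + 1) :
    (∀ R, IsRootInf a b R → ¬ IsMM R →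
      ∃ R', IsRootInf a (b - 2) R' ∧ restrictC a (b - 2) (sigmaT a R) = sigmaT a R' ∧
        Cspan a R = (Cspan a R').map (embedL a (b - 2) (sigmaT a R))) ∧
    (∀ R, IsRootInf a b R → IsMM R →
      ∃ R' R'', IsRootInf a (b - 2) R' ∧ IsRootInf a (b - 2) R'' ∧
        restrictC a (b - 2) (sigmaT a R) = sigmaT a R' ∧
        restrictC a (b - 2) (sigmaT a (rootD R)) = sigmaT a R'' ∧
        Cspan a R = (Cspan a R').map (embedL a (b - 2) (sigmaT a R)) ⊔
          (Cspan a R'').map (embedL a (b - 2) (sigmaT a (rootD R))) ∧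
        (∀ φ ∈ (Cspan a R').map (embedL a (b - 2) (sigmaT a R)),
          ∀ χ ∈ (Cspan a R'').map (embedL a (b - 2) (sigmaT a (rootD R))),
            inner' φ χ = 0)) := by
  have h6 : 6 ≤ b - a + 1 := by omega
  constructor
  · -- Part 1: R ∉ ℛ^MM
    intro R hR hMM
    obtain ⟨f, m, l, rfl, hf, hl, hmid, hD, hD1, hflen⟩ := root_decomp h6 hR
    have hflt : f.length ≤ 3 := by
      rcases hf with rfl | rfl | rfl <;> simp [tileV, tileM, tileBl]
    unfold IsMM at hMM
    rcases hl with rfl | rfl | rfl | rfl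
    · -- Case l = V
      rcases m.eq_nil_or_concat' with rfl | ⟨m', x, hm⟩
      · exfalso
        have e : (f :: (([] : List (List ℕ)) ++ [tileV])).flatten.length = f.length + 1 := by
          simp [tileV]
        omega
      · have hm'sub : ∀ t ∈ m', t = tileV ∨ t = tileM := fun t ht =>
          hmid t (by rw [hm]; exact List.mem_append_left _ ht)
        rcases hmid x (by rw [hm]; simp) with rfl | rfl
        · -- Case (a1): x = V, R' = f :: m'
          rcases m'.eq_nil_or_concat' with rfl | ⟨m'', y, hm2⟩
          · exfalso
            have e : (f :: (m ++ [tileV])).flatten.length = f.length + 2 := by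
              rw [hm]; simp [tileV]
            omega
          · have hre1 : f :: (m ++ [tileV]) = (f :: (m' ++ [tileV])) ++ [tileV] := by
              rw [hm]; simp
            have hre2 : f :: (m' ++ [tileV]) = (f :: m') ++ [tileV] := by simp
            have hRfl : (f :: (m ++ [tileV])).flatten = (f :: m').flatten ++ [0, 0] := by
              rw [hm]; simp [tileV]
            have hlen' : (((f :: m').flatten.length : ℤ)) = b - 2 - a + 1 := by
              have e : (f :: (m ++ [tileV])).flatten.length = (f :: m').flatten.length + 2 := by
                rw [hRfl]; simp; try omega
              omega
            have hRI : IsRootInf a (b - 2) (f :: m') := by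
              rw [hm2]
              refine rootinf_build a (b - 2) f m'' y hf ?_
                (fun t ht => hm'sub t (by rw [hm2]; exact List.mem_append_left _ ht))
                (by rw [← hm2]; exact hlen')
              rcases hm'sub y (by rw [hm2]; simp) with rfl | rfl
              · exact Or.inl rfl
              · exact Or.inr (Or.inl rfl)
            refine ⟨f :: m', hRI, restrict_sigma' a b _ _ [0, 0] hRfl hlen', ?_⟩
            refine cspan_map_rel a b _ _ hD hD1 hRI.1.2.1 hRI.1.2.2 [0, 0] rfl hRfl hlen' ?_ ?_
            · intro T' hT'
              refine ⟨T' ++ [tileV, tileV], ?_, by simp [tileV]⟩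
              rw [show f :: (m ++ [tileV]) = (f :: m') ++ [tileV, tileV] from by rw [hm]; simp]
              exact dimz_append hT' (dimz_refl _)
            · intro T hT
              obtain ⟨T₀, rfl, h₀⟩ := dimz_snoc_other (by decide) (by decide) hT hre1
              obtain ⟨T₁, rfl, h₁⟩ := dimz_snoc_other (by decide) (by decide) h₀ hre2
              exact ⟨T₁, h₁, by simp [tileV]⟩
        · -- Case (a2): x = M, R' = f :: (m' ++ [M¹])
          have hre1 : f :: (m ++ [tileV]) = (f :: (m' ++ [tileM])) ++ [tileV] := by
            rw [hm]; simp
          have hre2 : f :: (m' ++ [tileM]) = (f :: m') ++ [tileM] := by simp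
          have hre3 : f :: (m' ++ [tileM1]) = (f :: m') ++ [tileM1] := by simp
          have hRfl : (f :: (m ++ [tileV])).flatten
              = (f :: (m' ++ [tileM1])).flatten ++ [0, 0] := by
            rw [hm]; simp [tileV, tileM, tileM1]
          have hlen' : (((f :: (m' ++ [tileM1])).flatten.length : ℤ)) = b - 2 - a + 1 := by
            have e : (f :: (m ++ [tileV])).flatten.length
                = (f :: (m' ++ [tileM1])).flatten.length + 2 := by
              rw [hRfl]; simp; try omega
            omega
          have hRI : IsRootInf a (b - 2) (f :: (m' ++ [tileM1])) :=
            rootinf_build a (b - 2) f m' tileM1 hf (Or.inr (Or.inr (Or.inl rfl))) hm'sub hlen'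
          refine ⟨f :: (m' ++ [tileM1]), hRI, restrict_sigma' a b _ _ [0, 0] hRfl hlen', ?_⟩
          refine cspan_map_rel a b _ _ hD hD1 hRI.1.2.1 hRI.1.2.2 [0, 0] rfl hRfl hlen' ?_ ?_
          · intro T' hT'
            rcases dimz_snoc_M1 hT' hre3 with ⟨T₁, rfl, h₁⟩ | ⟨R₁, T₂, hEq, rfl, h₂⟩
            · refine ⟨T₁ ++ [tileM, tileV], ?_, by simp [tileM, tileM1, tileV]⟩
              rw [show f :: (m ++ [tileV]) = (f :: m') ++ [tileM, tileV] from by rw [hm]; simp]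
              exact dimz_append h₁ (dimz_refl _)
            · refine ⟨T₂ ++ [tileD, tileV], ?_, by simp [tileD, tileD1, tileV]⟩
              rw [show f :: (m ++ [tileV]) = (f :: m') ++ [tileM, tileV] from by rw [hm]; simp,
                hEq, show (R₁ ++ [tileM]) ++ [tileM, tileV] = R₁ ++ [tileM, tileM, tileV] by simp]
              exact dimz_append h₂ (Dimz.pair (dimz_refl _))
          · intro T hT
            obtain ⟨T₀, rfl, h₀⟩ := dimz_snoc_other (by decide) (by decide) hT hre1
            rcases dimz_snoc_M h₀ hre2 with ⟨T₁, rfl, h₁⟩ | ⟨R₁, T₂, hEq, rfl, h₂⟩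
            · refine ⟨T₁ ++ [tileM1], ?_, by simp [tileM, tileM1, tileV]⟩
              rw [hre3]; exact dimz_append h₁ (dimz_refl _)
            · refine ⟨T₂ ++ [tileD1], ?_, by simp [tileD, tileD1, tileV]⟩
              rw [hre3, hEq, show (R₁ ++ [tileM]) ++ [tileM1] = R₁ ++ [tileM, tileM1] by simp]
              exact dimz_append h₂ (Dimz.pair1 Dimz.nil)
    · -- Case l = M (not MM): second-to-last is V
      have hmc : monCount (f :: (m ++ [tileM])) = monCount (f :: m) + 1 := by
        rw [show f :: (m ++ [tileM]) = (f :: m) ++ [tileM] by simp, monCount_snoc,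
          if_pos (Or.inl rfl)]
      rcases m.eq_nil_or_concat' with rfl | ⟨m', x, hm⟩
      · exfalso
        have e : (f :: (([] : List (List ℕ)) ++ [tileM])).flatten.length = f.length + 2 := by
          simp [tileM]
        omega
      · have hm'sub : ∀ t ∈ m', t = tileV ∨ t = tileM := fun t ht =>
          hmid t (by rw [hm]; exact List.mem_append_left _ ht)
        have hxV : x = tileV := by
          rcases hmid x (by rw [hm]; simp) with rfl | rfl
          · rfl
          · exfalso
            rw [hmc, hm, show f :: (m' ++ [tileM]) = (f :: m') ++ [tileM] by simp,
              monCount_snoc, if_pos (Or.inl rfl)] at hMM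
            omega
        subst hxV
        have hre1 : f :: (m ++ [tileM]) = (f :: m) ++ [tileM] := by simp
        have hre2 : f :: m = (f :: m') ++ [tileV] := by rw [hm]; simp
        have hRfl : (f :: (m ++ [tileM])).flatten = (f :: m).flatten ++ [1, 0] := by
          simp [tileM]
        have hlen' : (((f :: m).flatten.length : ℤ)) = b - 2 - a + 1 := by
          have e : (f :: (m ++ [tileM])).flatten.length = (f :: m).flatten.length + 2 := by
            rw [hRfl]; simp; try omega
          omega
        have hRI : IsRootInf a (b - 2) (f :: m) := by
          rw [hm]
          exact rootinf_build a (b - 2) f m' tileV hf (Or.inl rfl) hm'sub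
            (by rw [← hm]; exact hlen')
        refine ⟨f :: m, hRI, restrict_sigma' a b _ _ [1, 0] hRfl hlen', ?_⟩
        refine cspan_map_rel a b _ _ hD hD1 hRI.1.2.1 hRI.1.2.2 [1, 0] rfl hRfl hlen' ?_ ?_
        · intro T' hT'
          refine ⟨T' ++ [tileM], ?_, by simp [tileM]⟩
          rw [hre1]; exact dimz_append hT' (dimz_refl _)
        · intro T hT
          rcases dimz_snoc_M hT hre1 with ⟨T₀, rfl, h₀⟩ | ⟨R₁, T₁, hEq, rfl, h₁⟩
          · exact ⟨T₀, h₀, by simp [tileM]⟩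
          · exfalso
            have h2 : (f :: m') ++ [tileV] = R₁ ++ [tileM] := by rw [← hre2]; exact hEq
            exact absurd (snoc_ne h2) (by decide)
    · -- Case l = M¹ (not MM): second-to-last is V, R' = f :: m'
      have hmc : monCount (f :: (m ++ [tileM1])) = monCount (f :: m) + 1 := by
        rw [show f :: (m ++ [tileM1]) = (f :: m) ++ [tileM1] by simp, monCount_snoc,
          if_pos (Or.inr rfl)]
      rcases m.eq_nil_or_concat' with rfl | ⟨m', x, hm⟩
      · exfalso
        have e : (f :: (([] : List (List ℕ)) ++ [tileM1])).flatten.length = f.length + 1 := by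
          simp [tileM1]
        omega
      · have hm'sub : ∀ t ∈ m', t = tileV ∨ t = tileM := fun t ht =>
          hmid t (by rw [hm]; exact List.mem_append_left _ ht)
        have hxV : x = tileV := by
          rcases hmid x (by rw [hm]; simp) with rfl | rfl
          · rfl
          · exfalso
            rw [hmc, hm, show f :: (m' ++ [tileM]) = (f :: m') ++ [tileM] by simp,
              monCount_snoc, if_pos (Or.inl rfl)] at hMM
            omega
        subst hxV
        rcases m'.eq_nil_or_concat' with rfl | ⟨m'', y, hm2⟩
        · exfalso
          have e : (f :: (m ++ [tileM1])).flatten.length = f.length + 2 := by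
            rw [hm]; simp [tileV, tileM1]
          omega
        · have hre1 : f :: (m ++ [tileM1]) = (f :: m) ++ [tileM1] := by simp
          have hre2 : f :: m = (f :: m') ++ [tileV] := by rw [hm]; simp
          have hRfl : (f :: (m ++ [tileM1])).flatten = (f :: m').flatten ++ [0, 1] := by
            rw [hm]; simp [tileV, tileM1]
          have hlen' : (((f :: m').flatten.length : ℤ)) = b - 2 - a + 1 := by
            have e : (f :: (m ++ [tileM1])).flatten.length
                = (f :: m').flatten.length + 2 := by
              rw [hRfl]; simp; try omega
            omega
          have hRI : IsRootInf a (b - 2) (f :: m') := by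
            rw [hm2]
            refine rootinf_build a (b - 2) f m'' y hf ?_
              (fun t ht => hm'sub t (by rw [hm2]; exact List.mem_append_left _ ht))
              (by rw [← hm2]; exact hlen')
            rcases hm'sub y (by rw [hm2]; simp) with rfl | rfl
            · exact Or.inl rfl
            · exact Or.inr (Or.inl rfl)
          refine ⟨f :: m', hRI, restrict_sigma' a b _ _ [0, 1] hRfl hlen', ?_⟩
          refine cspan_map_rel a b _ _ hD hD1 hRI.1.2.1 hRI.1.2.2 [0, 1] rfl hRfl hlen' ?_ ?_
          · intro T' hT'
            refine ⟨T' ++ [tileV, tileM1], ?_, by simp [tileV, tileM1]⟩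
            rw [show f :: (m ++ [tileM1]) = (f :: m') ++ [tileV, tileM1] from by rw [hm]; simp]
            exact dimz_append hT' (dimz_refl _)
          · intro T hT
            rcases dimz_snoc_M1 hT hre1 with ⟨T₀, rfl, h₀⟩ | ⟨R₁, T₁, hEq, rfl, h₁⟩
            · obtain ⟨T₁, rfl, h₁⟩ := dimz_snoc_other (by decide) (by decide) h₀ hre2
              exact ⟨T₁, h₁, by simp [tileV, tileM1]⟩
            · exfalso
              have h2 : (f :: m') ++ [tileV] = R₁ ++ [tileM] := by rw [← hre2]; exact hEq
              exact absurd (snoc_ne h2) (by decide)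
    · -- Case l = B₂ʳ: R' = f :: m
      rcases m.eq_nil_or_concat' with rfl | ⟨m', x, hm⟩
      · exfalso
        have e : (f :: (([] : List (List ℕ)) ++ [tileBr 2])).flatten.length
            = f.length + 2 := by simp [tileBr]
        omega
      · have hm'sub : ∀ t ∈ m', t = tileV ∨ t = tileM := fun t ht =>
          hmid t (by rw [hm]; exact List.mem_append_left _ ht)
        have hre1 : f :: (m ++ [tileBr 2]) = (f :: m) ++ [tileBr 2] := by simp
        have hRfl : (f :: (m ++ [tileBr 2])).flatten = (f :: m).flatten ++ [0, 2] := by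
          simp [tileBr]
        have hlen' : (((f :: m).flatten.length : ℤ)) = b - 2 - a + 1 := by
          have e : (f :: (m ++ [tileBr 2])).flatten.length = (f :: m).flatten.length + 2 := by
            rw [hRfl]; simp; try omega
          omega
        have hRI : IsRootInf a (b - 2) (f :: m) := by
          rw [hm]
          refine rootinf_build a (b - 2) f m' x hf ?_ hm'sub (by rw [← hm]; exact hlen')
          rcases hmid x (by rw [hm]; simp) with rfl | rfl
          · exact Or.inl rfl
          · exact Or.inr (Or.inl rfl)
        refine ⟨f :: m, hRI, restrict_sigma' a b _ _ [0, 2] hRfl hlen', ?_⟩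
        refine cspan_map_rel a b _ _ hD hD1 hRI.1.2.1 hRI.1.2.2 [0, 2] rfl hRfl hlen' ?_ ?_
        · intro T' hT'
          refine ⟨T' ++ [tileBr 2], ?_, by simp [tileBr]⟩
          rw [hre1]; exact dimz_append hT' (dimz_refl _)
        · intro T hT
          obtain ⟨T₀, rfl, h₀⟩ := dimz_snoc_other (by decide) (by decide) hT hre1
          exact ⟨T₀, h₀, by simp [tileBr]⟩
  · -- Part 2: R ∈ ℛ^MM
    intro R hR hMM
    obtain ⟨f, m, l, rfl, hf, hl, hmid, hD, hD1, hflen⟩ := root_decomp h6 hR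
    have hflt : f.length ≤ 3 := by
      rcases hf with rfl | rfl | rfl <;> simp [tileV, tileM, tileBl]
    unfold IsMM at hMM
    rcases hl with rfl | rfl | rfl | rfl
    · -- l = V: impossible
      exfalso
      rw [show f :: (m ++ [tileV]) = (f :: m) ++ [tileV] by simp, monCount_snoc,
        if_neg (by decide)] at hMM
      omega
    · -- l = M
      rw [show f :: (m ++ [tileM]) = (f :: m) ++ [tileM] by simp, monCount_snoc,
        if_pos (Or.inl rfl)] at hMM
      rcases m.eq_nil_or_concat' with rfl | ⟨m', x, hm⟩
      · exfalso
        have e : monCount [f] = if f = tileM ∨ f = tileM1 then 1 else 0 := by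
          simpa [show monCount [] = 0 from rfl] using monCount_snoc [] f
        rcases hf with rfl | rfl | rfl
        · rw [if_neg (by decide)] at e; omega
        · have e2 : ((tileM :: (([] : List (List ℕ)) ++ [tileM])).flatten.length) = 4 := by
            simp [tileM]
          omega
        · rw [if_neg (by decide)] at e; omega
      · have hm'sub : ∀ t ∈ m', t = tileV ∨ t = tileM := fun t ht =>
          hmid t (by rw [hm]; exact List.mem_append_left _ ht)
        have hxM : x = tileM := by
          rcases hmid x (by rw [hm]; simp) with rfl | rfl
          · exfalso
            rw [hm, show f :: (m' ++ [tileV]) = (f :: m') ++ [tileV] by simp, monCount_snoc,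
              if_neg (by decide)] at hMM
            omega
          · rfl
        subst hxM
        have hre1 : f :: (m ++ [tileM]) = (f :: m) ++ [tileM] := by simp
        have hre2 : f :: m = (f :: m') ++ [tileM] := by rw [hm]; simp
        have hre3 : f :: (m' ++ [tileBr 2]) = (f :: m') ++ [tileBr 2] := by simp
        have hRfl : (f :: (m ++ [tileM])).flatten = (f :: m).flatten ++ [1, 0] := by
          simp [tileM]
        have hlen' : (((f :: m).flatten.length : ℤ)) = b - 2 - a + 1 := by
          have e : (f :: (m ++ [tileM])).flatten.length = (f :: m).flatten.length + 2 := by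
            rw [hRfl]; simp; try omega
          omega
        have hRdf : rootD (f :: (m ++ [tileM])) = (f :: m') ++ [tileD] := by
          have hlast : (f :: (m ++ [tileM])).getLast? = some tileM := by
            rw [hre1]; exact List.getLast?_concat
          have htake : (f :: (m ++ [tileM])).take ((f :: (m ++ [tileM])).length - 2)
              = f :: m' := by
            rw [show f :: (m ++ [tileM]) = (f :: m') ++ [tileM, tileM] from by rw [hm]; simp]
            rw [show ((f :: m') ++ [tileM, tileM]).length - 2 = (f :: m').length by simp]
            exact List.take_left' rfl
          unfold rootD
          rw [hlast, htake, if_neg (by decide)]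
        have hRdfl : (rootD (f :: (m ++ [tileM]))).flatten
            = (f :: (m' ++ [tileBr 2])).flatten ++ [0, 0] := by
          rw [hRdf]; simp [tileD, tileBr]
        have hlen'' : (((f :: (m' ++ [tileBr 2])).flatten.length : ℤ)) = b - 2 - a + 1 := by
          have e1 : (f :: m).flatten = (f :: m').flatten ++ [1, 0] := by
            rw [hm]; simp [tileM]
          have e2 : (f :: (m' ++ [tileBr 2])).flatten.length
              = (f :: m').flatten.length + 2 := by simp [tileBr]; try omega
          have e3 : (f :: m).flatten.length = (f :: m').flatten.length + 2 := by
            rw [e1]; simp; try omega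
          omega
        have hRI' : IsRootInf a (b - 2) (f :: m) := by
          rw [hm]
          exact rootinf_build a (b - 2) f m' tileM hf (Or.inr (Or.inl rfl)) hm'sub
            (by rw [← hm]; exact hlen')
        have hRI'' : IsRootInf a (b - 2) (f :: (m' ++ [tileBr 2])) :=
          rootinf_build a (b - 2) f m' (tileBr 2) hf (Or.inr (Or.inr (Or.inr rfl)))
            hm'sub hlen''
        refine ⟨f :: m, f :: (m' ++ [tileBr 2]), hRI', hRI'',
          restrict_sigma' a b _ _ [1, 0] hRfl hlen',
          restrict_sigma' a b _ _ [0, 0] hRdfl hlen'', ?_, ?_⟩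
        · refine cspan_map_pair a b _ _ _ _ hD hD1 hRI'.1.2.1 hRI'.1.2.2
            hRI''.1.2.1 hRI''.1.2.2 [1, 0] [0, 0] rfl rfl hRfl hRdfl hlen' hlen'' ?_ ?_ ?_
          · intro T' hT'
            refine ⟨T' ++ [tileM], ?_, by simp [tileM]⟩
            rw [hre1]; exact dimz_append hT' (dimz_refl _)
          · intro T'' hT''
            obtain ⟨T₂, rfl, h₂⟩ := dimz_snoc_other (by decide) (by decide) hT'' hre3
            refine ⟨T₂ ++ [tileD], ?_, by simp [tileD, tileBr]⟩
            rw [show f :: (m ++ [tileM]) = (f :: m') ++ [tileM, tileM] from by rw [hm]; simp]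
            exact dimz_append h₂ (Dimz.pair Dimz.nil)
          · intro T hT
            rcases dimz_snoc_M hT hre1 with ⟨T₀, rfl, h₀⟩ | ⟨R₁, T₁, hEq, rfl, h₁⟩
            · exact Or.inl ⟨T₀, h₀, by simp [tileM]⟩
            · have hR₁ : f :: m' = R₁ :=
                List.append_cancel_right (by rw [← hre2]; exact hEq)
              subst hR₁
              exact Or.inr ⟨T₁ ++ [tileBr 2],
                by rw [hre3]; exact dimz_append h₁ (dimz_refl _), by simp [tileD, tileBr]⟩
        · have e1 := sigma_at a b _ (f :: m).flatten 1 0 hRfl (by omega)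
          have e2 := sigma_at a b _ (f :: (m' ++ [tileBr 2])).flatten 0 0 hRdfl (by omega)
          intro φ hφ χ hχ
          obtain ⟨φ₀, -, rfl⟩ := Submodule.mem_map.mp hφ
          obtain ⟨χ₀, -, rfl⟩ := Submodule.mem_map.mp hχ
          exact inner_embed_zero (p := b - 1) (Or.inr (by omega))
            (by rw [e1.1, e2.1]; exact one_ne_zero) φ₀ χ₀
    · -- l = M¹
      rw [show f :: (m ++ [tileM1]) = (f :: m) ++ [tileM1] by simp, monCount_snoc,
        if_pos (Or.inr rfl)] at hMM
      rcases m.eq_nil_or_concat' with rfl | ⟨m', x, hm⟩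
      · exfalso
        have e : monCount [f] = if f = tileM ∨ f = tileM1 then 1 else 0 := by
          simpa [show monCount [] = 0 from rfl] using monCount_snoc [] f
        rcases hf with rfl | rfl | rfl
        · rw [if_neg (by decide)] at e; omega
        · have e2 : ((tileM :: (([] : List (List ℕ)) ++ [tileM1])).flatten.length) = 3 := by
            simp [tileM, tileM1]
          omega
        · rw [if_neg (by decide)] at e; omega
      · have hm'sub : ∀ t ∈ m', t = tileV ∨ t = tileM := fun t ht =>
          hmid t (by rw [hm]; exact List.mem_append_left _ ht)
        have hxM : x = tileM := by
          rcases hmid x (by rw [hm]; simp) with rfl | rfl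
          · exfalso
            rw [hm, show f :: (m' ++ [tileV]) = (f :: m') ++ [tileV] by simp, monCount_snoc,
              if_neg (by decide)] at hMM
            omega
          · rfl
        subst hxM
        have hre1 : f :: (m ++ [tileM1]) = (f :: m) ++ [tileM1] := by simp
        have hre2 : f :: m = (f :: m') ++ [tileM] := by rw [hm]; simp
        have hre3 : f :: (m' ++ [tileM1]) = (f :: m') ++ [tileM1] := by simp
        have hre4 : f :: (m' ++ [tileV]) = (f :: m') ++ [tileV] := by simp
        have hRfl : (f :: (m ++ [tileM1])).flatten
            = (f :: (m' ++ [tileM1])).flatten ++ [0, 1] := by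
          rw [hm]; simp [tileM, tileM1]
        have hlen' : (((f :: (m' ++ [tileM1])).flatten.length : ℤ)) = b - 2 - a + 1 := by
          have e : (f :: (m ++ [tileM1])).flatten.length
              = (f :: (m' ++ [tileM1])).flatten.length + 2 := by
            rw [hRfl]; simp; try omega
          omega
        have hRdf : rootD (f :: (m ++ [tileM1])) = (f :: m') ++ [tileD1] := by
          have hlast : (f :: (m ++ [tileM1])).getLast? = some tileM1 := by
            rw [hre1]; exact List.getLast?_concat
          have htake : (f :: (m ++ [tileM1])).take ((f :: (m ++ [tileM1])).length - 2)
              = f :: m' := by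
            rw [show f :: (m ++ [tileM1]) = (f :: m') ++ [tileM, tileM1] from by rw [hm]; simp]
            rw [show ((f :: m') ++ [tileM, tileM1]).length - 2 = (f :: m').length by simp]
            exact List.take_left' rfl
          unfold rootD
          rw [hlast, htake, if_pos rfl]
        have hRdfl : (rootD (f :: (m ++ [tileM1]))).flatten
            = (f :: (m' ++ [tileV])).flatten ++ [2, 0] := by
          rw [hRdf]; simp [tileD1, tileV]
        have hlen'' : (((f :: (m' ++ [tileV])).flatten.length : ℤ)) = b - 2 - a + 1 := by
          have e1 : (f :: (m' ++ [tileV])).flatten.length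
              = (f :: m').flatten.length + 1 := by simp [tileV]; try omega
          have e2 : (f :: (m' ++ [tileM1])).flatten.length
              = (f :: m').flatten.length + 1 := by simp [tileM1]; try omega
          omega
        have hRI' : IsRootInf a (b - 2) (f :: (m' ++ [tileM1])) :=
          rootinf_build a (b - 2) f m' tileM1 hf (Or.inr (Or.inr (Or.inl rfl))) hm'sub hlen'
        have hRI'' : IsRootInf a (b - 2) (f :: (m' ++ [tileV])) :=
          rootinf_build a (b - 2) f m' tileV hf (Or.inl rfl) hm'sub hlen''
        refine ⟨f :: (m' ++ [tileM1]), f :: (m' ++ [tileV]), hRI', hRI'',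
          restrict_sigma' a b _ _ [0, 1] hRfl hlen',
          restrict_sigma' a b _ _ [2, 0] hRdfl hlen'', ?_, ?_⟩
        · refine cspan_map_pair a b _ _ _ _ hD hD1 hRI'.1.2.1 hRI'.1.2.2
            hRI''.1.2.1 hRI''.1.2.2 [0, 1] [2, 0] rfl rfl hRfl hRdfl hlen' hlen'' ?_ ?_ ?_
          · intro T' hT'
            rcases dimz_snoc_M1 hT' hre3 with ⟨T₁, rfl, h₁⟩ | ⟨R₁, T₃, hEq, rfl, h₃⟩
            · refine ⟨T₁ ++ [tileM, tileM1], ?_, by simp [tileM, tileM1]⟩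
              rw [show f :: (m ++ [tileM1]) = (f :: m') ++ [tileM, tileM1] from by
                rw [hm]; simp]
              exact dimz_append h₁ (dimz_refl _)
            · refine ⟨T₃ ++ [tileD, tileM1], ?_, by simp [tileD, tileD1, tileM1]⟩
              rw [show f :: (m ++ [tileM1]) = (f :: m') ++ [tileM, tileM1] from by
                rw [hm]; simp, hEq,
                show (R₁ ++ [tileM]) ++ [tileM, tileM1] = R₁ ++ [tileM, tileM, tileM1] by simp]
              exact dimz_append h₃ (Dimz.pair (dimz_refl _))
          · intro T'' hT''
            obtain ⟨T₂, rfl, h₂⟩ := dimz_snoc_other (by decide) (by decide) hT'' hre4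
            refine ⟨T₂ ++ [tileD1], ?_, by simp [tileD1, tileV]⟩
            rw [show f :: (m ++ [tileM1]) = (f :: m') ++ [tileM, tileM1] from by rw [hm]; simp]
            exact dimz_append h₂ (Dimz.pair1 Dimz.nil)
          · intro T hT
            rcases dimz_snoc_M1 hT hre1 with ⟨T₀, rfl, h₀⟩ | ⟨R₁, T₂, hEq, rfl, h₂⟩
            · rcases dimz_snoc_M h₀ hre2 with ⟨T₁, rfl, h₁⟩ | ⟨R₂, T₃, hEq2, rfl, h₃⟩
              · exact Or.inl ⟨T₁ ++ [tileM1],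
                  by rw [hre3]; exact dimz_append h₁ (dimz_refl _),
                  by simp [tileM, tileM1]⟩
              · refine Or.inl ⟨T₃ ++ [tileD1], ?_, by simp [tileD, tileD1, tileM1]⟩
                rw [hre3, hEq2,
                  show (R₂ ++ [tileM]) ++ [tileM1] = R₂ ++ [tileM, tileM1] by simp]
                exact dimz_append h₃ (Dimz.pair1 Dimz.nil)
            · have hR₁ : f :: m' = R₁ :=
                List.append_cancel_right (by rw [← hre2]; exact hEq)
              subst hR₁
              exact Or.inr ⟨T₂ ++ [tileV],
                by rw [hre4]; exact dimz_append h₂ (dimz_refl _), by simp [tileD1, tileV]⟩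
        · have e1 := sigma_at a b _ (f :: (m' ++ [tileM1])).flatten 0 1 hRfl (by omega)
          have e2 := sigma_at a b _ (f :: (m' ++ [tileV])).flatten 2 0 hRdfl (by omega)
          intro φ hφ χ hχ
          obtain ⟨φ₀, -, rfl⟩ := Submodule.mem_map.mp hφ
          obtain ⟨χ₀, -, rfl⟩ := Submodule.mem_map.mp hχ
          exact inner_embed_zero (p := b) (Or.inr (by omega))
            (by rw [e1.2, e2.2]; exact one_ne_zero) φ₀ χ₀
    · -- l = B₂ʳ: impossible
      exfalso
      rw [show f :: (m ++ [tileBr 2]) = (f :: m) ++ [tileBr 2] by simp, monCount_snoc,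
        if_neg (by decide)] at hMM
      omega

end Bose
end
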